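/- arXiv:2107.01089 — 3 statements merged into one kernel-verified Lean document; each statement's English description precedes it below -/
import Mathlib

section
/- Let 1 ≤ p, q ≤ ∞ and suppose there is a constant C such that ‖M_{ℍ¹}f‖_{L^q(ℝ³)} ≤ C‖f‖_{L^p(ℝ³)} holds for every Heisenberg radial function f ∈ L^p. Then necessarily p ≤ q, 1 + 1/q ≥ 3/p, and 3/q ≥ 2/p; that is, (1/p,1/q) lies in the closed triangle T with vertices (0,0), (1/2,1/2), (3/7,2/7). -/
open MeasureTheory Real Set
open scoped ENNReal

noncomputable section

/-- The spherical average on the Heisenberg group ℍ¹ = ℝ²×ℝ: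
`f ∗_ℍ dσ_t(x,x₃) = ∫_{𝕊¹} f(x−ty, x₃−t x·Ay) dσ(y)` where `A` has rows `(0,−1),(1,0)`,
the circle being parametrized by arclength. -/
def heisAvg (f : ℝ × ℝ × ℝ → ℂ) (t : ℝ) (x : ℝ × ℝ × ℝ) : ℂ :=
  ∫ θ in Set.Ioc (0:ℝ) (2 * π),
    f (x.1 - t * Real.cos θ, x.2.1 - t * Real.sin θ,
       x.2.2 - t * (x.1 * (-Real.sin θ) + x.2.1 * Real.cos θ))

/-- A function on ℍ¹ is Heisenberg radial if `f(Rx,x₃) = f(x,x₃)` for every rotation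
`R ∈ SO(2)` (parametrized by its angle). -/
def HeisRadial (f : ℝ × ℝ × ℝ → ℂ) : Prop :=
  ∀ α : ℝ, ∀ x : ℝ × ℝ × ℝ,
    f (Real.cos α * x.1 - Real.sin α * x.2.1,
       Real.sin α * x.1 + Real.cos α * x.2.1, x.2.2) = f x

/-- The local spherical maximal function `M_{ℍ¹} f = sup_{1<t<2} |f ∗_ℍ dσ_t|`. -/
def heisMax (f : ℝ × ℝ × ℝ → ℂ) (x : ℝ × ℝ × ℝ) : ℝ :=
  ⨆ t ∈ Set.Ioo (1:ℝ) 2, ‖heisAvg f t x‖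

/-!
Test the bound on indicators `f = 𝟙_E` of Heisenberg-radial sets: if `M_{ℍ¹} 𝟙_E ≥ c` on a set
`G`, then `c |G|^{1/q} ≲ |E|^{1/p}`. Three families of sets, with a parameter `R → ∞` or `δ → 0`,
give the three inequalities.
* `E` a cylinder of radius `R` and height `5R`, `G` one of radius `R/4` and height `R`: for
  `x ∈ G` the whole circle of radius `3/2` lies in `E`, so `c = 2π` and `|G| ~ |E| ~ R³`.
* `E` the annulus of radii `3/2 ± δ` and height `3δ`, `G` a cylinder of radius `δ/4` and height
  `δ`: again `c = 2π`, now with `|G| ~ δ³` and `|E| ~ δ²`.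
* `E` a cylinder of radius `δ` and height `10δ` around the centre, `G` a box with `|x'| ∈ (1, 2)`
  and `|x₃| ≤ 8δ`: the circle of radius `t = |x'|` through `x` passes through the origin and
  spends an arc of length `δ/4` in `E`, so `c = δ/4`, `|G| ~ δ` and `|E| ~ δ³`.
-/

open Filter Topology

lemma le_of_eventually_rpow_le_mul_rpow_atTop {s t K : ℝ}
    (h : ∀ᶠ R in atTop, R ^ s ≤ K * R ^ t) : s ≤ t := by
  by_contra! hts
  obtain ⟨R, hR, hRK, hR₀⟩ := (h.and <|
    ((tendsto_rpow_atTop (sub_pos.2 hts)).eventually_gt_atTop K).and (eventually_gt_atTop 0)).exists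
  rw [Real.rpow_sub hR₀, lt_div_iff₀ (by positivity)] at hRK
  linarith

lemma le_of_eventually_rpow_le_mul_rpow_nhdsGT {s t K : ℝ}
    (h : ∀ᶠ δ in 𝓝[>] 0, δ ^ t ≤ K * δ ^ s) : s ≤ t := by
  refine neg_le_neg_iff.1 (le_of_eventually_rpow_le_mul_rpow_atTop (K := K) ?_)
  filter_upwards [tendsto_inv_atTop_nhdsGT_zero.eventually h, eventually_gt_atTop 0] with R hR hR0
  rwa [Real.inv_rpow hR0.le, Real.inv_rpow hR0.le, ← Real.rpow_neg hR0.le,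
    ← Real.rpow_neg hR0.le] at hR

lemma rpow_le_mul_rpow_of_mul_pow_le {c k₁ k₂ K R a b : ℝ} {l m n : ℕ} (hc : 0 < c)
    (hk₁ : 0 < k₁) (hk₂ : 0 ≤ k₂) (hR : 0 < R)
    (h : c * R ^ l * (k₁ * R ^ m) ^ b ≤ K * (k₂ * R ^ n) ^ a) :
    R ^ (l + m * b) ≤ K * k₂ ^ a / (c * k₁ ^ b) * R ^ (n * a) := by
  rw [Real.mul_rpow hk₁.le (by positivity), Real.mul_rpow hk₂ (by positivity),
    ← Real.rpow_natCast_mul hR.le, ← Real.rpow_natCast_mul hR.le] at h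
  rw [div_mul_eq_mul_div, le_div_iff₀ (by positivity), Real.rpow_add hR, Real.rpow_natCast]
  linarith

lemma le_of_eventually_mul_pow_le_atTop {c k₁ k₂ K a b : ℝ} {l m n : ℕ} (hc : 0 < c)
    (hk₁ : 0 < k₁) (hk₂ : 0 ≤ k₂)
    (h : ∀ᶠ R in atTop, c * R ^ l * (k₁ * R ^ m) ^ b ≤ K * (k₂ * R ^ n) ^ a) :
    l + m * b ≤ n * a :=
  le_of_eventually_rpow_le_mul_rpow_atTop <| (h.and (eventually_gt_atTop 0)).mono
    fun _ hR => rpow_le_mul_rpow_of_mul_pow_le hc hk₁ hk₂ hR.2 hR.1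

lemma le_of_eventually_mul_pow_le_nhdsGT {c k₁ k₂ K a b : ℝ} {l m n : ℕ} (hc : 0 < c)
    (hk₁ : 0 < k₁) (hk₂ : 0 ≤ k₂)
    (h : ∀ᶠ δ in 𝓝[>] 0, c * δ ^ l * (k₁ * δ ^ m) ^ b ≤ K * (k₂ * δ ^ n) ^ a) :
    n * a ≤ l + m * b :=
  le_of_eventually_rpow_le_mul_rpow_nhdsGT <| (h.and self_mem_nhdsWithin).mono
    fun _ hδ => rpow_le_mul_rpow_of_mul_pow_le hc hk₁ hk₂ hδ.2 hδ.1

def heisCircle (t : ℝ) (x : ℝ × ℝ × ℝ) (θ : ℝ) : ℝ × ℝ × ℝ :=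
  (x.1 - t * cos θ, x.2.1 - t * sin θ, x.2.2 - t * (x.1 * (-sin θ) + x.2.1 * cos θ))

lemma norm_heisAvg_indicator_one {E : Set (ℝ × ℝ × ℝ)} (hE : MeasurableSet E) (t : ℝ)
    (x : ℝ × ℝ × ℝ) :
    ‖heisAvg (E.indicator 1) t x‖ = (volume (Ioc 0 (2 * π) ∩ heisCircle t x ⁻¹' E)).toReal := by
  have hmeas : Measurable (heisCircle t x) := by unfold heisCircle; fun_prop
  change ‖∫ θ in Ioc 0 (2 * π), (heisCircle t x ⁻¹' E).indicator 1 θ‖ = _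
  rw [setIntegral_indicator (hmeas hE), Pi.one_def, setIntegral_const, Measure.real]
  simp

lemma le_heisMax_indicator_one {E : Set (ℝ × ℝ × ℝ)} (hE : MeasurableSet E) {t : ℝ}
    (ht : t ∈ Ioo 1 2) {x : ℝ × ℝ × ℝ} {S : Set ℝ} (hS : S ⊆ Ioc 0 (2 * π))
    (hSE : MapsTo (heisCircle t x) S E) :
    (volume S).toReal ≤ heisMax (E.indicator 1) x := by
  have hfin : volume (Ioc (0 : ℝ) (2 * π)) ≠ ∞ := measure_Ioc_lt_top.ne
  have hbdd : BddAbove (range fun t => ‖heisAvg (E.indicator 1) t x‖) := by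
    refine ⟨(volume (Ioc (0 : ℝ) (2 * π))).toReal, forall_mem_range.2 fun t => ?_⟩
    rw [norm_heisAvg_indicator_one hE]
    exact ENNReal.toReal_mono hfin (measure_mono inter_subset_left)
  calc (volume S).toReal
      ≤ (volume (Ioc 0 (2 * π) ∩ heisCircle t x ⁻¹' E)).toReal :=
        ENNReal.toReal_mono (ne_top_of_le_ne_top hfin (measure_mono inter_subset_left))
          (measure_mono (subset_inter hS hSE))
    _ = ‖heisAvg (E.indicator 1) t x‖ := (norm_heisAvg_indicator_one hE t x).symm
    _ ≤ heisMax (E.indicator 1) x :=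
        le_ciSup₂ (f := fun t (_ : t ∈ Ioo (1 : ℝ) 2) => ‖heisAvg (E.indicator 1) t x‖)
          (hbdd.mono (iUnion_subset fun t => range_subset_iff.2 fun _ => mem_range_self t)) t ht

def RadialMaximalBound (p q : ℝ≥0∞) (C : ℝ) : Prop :=
  ∀ f : ℝ × ℝ × ℝ → ℂ, MemLp f p volume → HeisRadial f →
    eLpNorm (heisMax f) q volume ≤ ENNReal.ofReal C * eLpNorm f p volume

lemma RadialMaximalBound.mul_rpow_le {p q : ℝ≥0∞} {C : ℝ} (h : RadialMaximalBound p q C)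
    (hq : q ≠ 0) {E G : Set (ℝ × ℝ × ℝ)} {V g c : ℝ} (hE : MeasurableSet E)
    (hErad : HeisRadial (E.indicator 1)) (hEV : volume E = ENNReal.ofReal V) (hV : 0 ≤ V)
    (hG : MeasurableSet G) (hGg : volume G = ENNReal.ofReal g) (hg : 0 < g) (hc : 0 ≤ c)
    (hlow : ∀ x ∈ G, c ≤ heisMax (E.indicator 1) x) :
    c * g ^ q.toReal⁻¹ ≤ max C 0 * V ^ p.toReal⁻¹ := by
  have hmem : MemLp (E.indicator fun _ => (1 : ℂ)) p volume :=
    memLp_indicator_const p hE 1 (.inr (hEV ▸ ENNReal.ofReal_ne_top))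
  have hlowLp : eLpNorm (G.indicator fun _ => c) q volume ≤
      eLpNorm (heisMax (E.indicator 1)) q volume := by
    refine eLpNorm_mono fun x => ?_
    by_cases hx : x ∈ G
    · simpa [hx, abs_of_nonneg hc] using (hlow x hx).trans (le_abs_self _)
    · simp [hx]
  have key : ENNReal.ofReal c * ENNReal.ofReal g ^ q.toReal⁻¹ ≤
      ENNReal.ofReal (max C 0) * ENNReal.ofReal V ^ p.toReal⁻¹ := by
    calc ENNReal.ofReal c * ENNReal.ofReal g ^ q.toReal⁻¹
        = eLpNorm (G.indicator fun _ => c) q volume := by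
          rw [eLpNorm_indicator_const' hG (hGg ▸ ENNReal.ofReal_pos.2 hg).ne' hq, hGg,
            Real.enorm_eq_ofReal hc, one_div]
      _ ≤ ENNReal.ofReal C * eLpNorm (E.indicator fun _ => (1 : ℂ)) p volume :=
          hlowLp.trans (h _ hmem hErad)
      _ ≤ ENNReal.ofReal (max C 0) * ENNReal.ofReal V ^ p.toReal⁻¹ := by
          gcongr
          · exact le_max_left C 0
          · simpa [hEV] using eLpNorm_indicator_const_le (μ := volume) (c := (1 : ℂ)) (s := E) p
  rwa [ENNReal.ofReal_rpow_of_nonneg hg.le (by positivity),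
    ENNReal.ofReal_rpow_of_nonneg hV (by positivity), ← ENNReal.ofReal_mul hc,
    ← ENNReal.ofReal_mul (le_max_right C 0), ENNReal.ofReal_le_ofReal_iff (by positivity)] at key

def annularCylinder (a b h : ℝ) : Set (ℝ × ℝ × ℝ) :=
  {v | a ^ 2 ≤ v.1 ^ 2 + v.2.1 ^ 2 ∧ v.1 ^ 2 + v.2.1 ^ 2 ≤ b ^ 2 ∧ |v.2.2| ≤ h}

lemma mem_annularCylinder_zero {b h : ℝ} {v : ℝ × ℝ × ℝ} :
    v ∈ annularCylinder 0 b h ↔ v.1 ^ 2 + v.2.1 ^ 2 ≤ b ^ 2 ∧ |v.2.2| ≤ h := by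
  simp [annularCylinder, add_nonneg, sq_nonneg]

lemma measurableSet_annularCylinder (a b h : ℝ) : MeasurableSet (annularCylinder a b h) := by
  simp only [annularCylinder, ofPred_and]
  refine (measurableSet_le ?_ ?_).inter ((measurableSet_le ?_ ?_).inter (measurableSet_le ?_ ?_))
    <;> fun_prop

lemma heisRadial_indicator_annularCylinder (a b h : ℝ) :
    HeisRadial ((annularCylinder a b h).indicator 1) := by
  intro α x
  have hrot : (cos α * x.1 - sin α * x.2.1) ^ 2 + (sin α * x.1 + cos α * x.2.1) ^ 2
      = x.1 ^ 2 + x.2.1 ^ 2 := by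
    linear_combination (x.1 ^ 2 + x.2.1 ^ 2) * sin_sq_add_cos_sq α
  simp only [indicator_apply, annularCylinder, mem_ofPred_eq, hrot, Pi.one_apply]

lemma volume_annularCylinder {a b : ℝ} (ha : 0 ≤ a) (hab : a ≤ b) (h : ℝ) :
    volume (annularCylinder a b h) = ENNReal.ofReal (π * (b ^ 2 - a ^ 2) * (2 * h)) := by
  set D : Set (ℝ × ℝ) := {w | a ^ 2 ≤ w.1 ^ 2 + w.2 ^ 2 ∧ w.1 ^ 2 + w.2 ^ 2 ≤ b ^ 2}
  have hD : D = Complex.measurableEquivRealProd.symm ⁻¹'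
      (Metric.closedBall 0 b \ Metric.ball 0 a) := by
    ext w
    have hw : ‖Complex.measurableEquivRealProd.symm w‖ ^ 2 = w.1 ^ 2 + w.2 ^ 2 := by
      rw [Complex.sq_norm, Complex.normSq_apply]
      simp [sq]
    simp only [D, mem_ofPred_eq, mem_preimage, Set.mem_sdiff, Metric.mem_closedBall,
      Metric.mem_ball, dist_zero_right, not_lt, ← hw]
    rw [sq_le_sq₀ ha (norm_nonneg _), sq_le_sq₀ (norm_nonneg _) (ha.trans hab), and_comm]
  have hab2 : 0 ≤ b ^ 2 - a ^ 2 := sub_nonneg.2 (pow_le_pow_left₀ ha hab 2)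
  have hDm : MeasurableSet D :=
    hD ▸ (measurableSet_closedBall.diff measurableSet_ball).preimage (MeasurableEquiv.measurable _)
  have hvolD : volume D = ENNReal.ofReal (π * (b ^ 2 - a ^ 2)) := by
    rw [hD, Complex.volume_preserving_equiv_real_prod.symm.measure_preimage
      (measurableSet_closedBall.diff measurableSet_ball).nullMeasurableSet,
      measure_sdiff (Metric.ball_subset_closedBall.trans (Metric.closedBall_subset_closedBall hab))
        measurableSet_ball.nullMeasurableSet measure_ball_lt_top.ne,
      Complex.volume_closedBall, Complex.volume_ball, ← ENNReal.ofReal_pow (ha.trans hab),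
      ← ENNReal.ofReal_pow ha, ENNReal.coe_nnreal_eq, NNReal.coe_real_pi,
      ← ENNReal.ofReal_mul (by positivity), ← ENNReal.ofReal_mul (by positivity),
      ← ENNReal.ofReal_sub _ (by positivity)]
    ring_nf
  have hcyl : annularCylinder a b h = MeasurableEquiv.prodAssoc.symm ⁻¹' (D ×ˢ Icc (-h) h) := by
    ext v
    simp only [annularCylinder, D, abs_le, mem_ofPred_eq, mem_preimage, mem_prod, mem_Icc]
    exact and_assoc.symm
  have hassoc : MeasurePreserving (MeasurableEquiv.prodAssoc (α := ℝ) (β := ℝ) (γ := ℝ)).symm :=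
    (measurePreserving_prodAssoc volume volume volume).symm
  rw [hcyl, hassoc.measure_preimage (hDm.prod measurableSet_Icc).nullMeasurableSet,
    Measure.volume_eq_prod, Measure.prod_prod, hvolD, Real.volume_Icc,
    ← ENNReal.ofReal_mul (by positivity)]
  ring_nf

lemma heisCircle_planar_sq_mem_Icc {t r : ℝ} (ht : 0 ≤ t) (hr : 0 ≤ r) {x : ℝ × ℝ × ℝ}
    (hx : x.1 ^ 2 + x.2.1 ^ 2 ≤ r ^ 2) (θ : ℝ) :
    (heisCircle t x θ).1 ^ 2 + (heisCircle t x θ).2.1 ^ 2 ∈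
      Icc (t ^ 2 - 2 * t * r) ((t + r) ^ 2) := by
  have hd : |x.1 * cos θ + x.2.1 * sin θ| ≤ r := by
    refine abs_le_of_sq_le_sq' ?_ hr |> abs_le.2
    nlinarith [sq_nonneg (x.1 * sin θ - x.2.1 * cos θ), sin_sq_add_cos_sq θ]
  have hexp : (heisCircle t x θ).1 ^ 2 + (heisCircle t x θ).2.1 ^ 2
      = x.1 ^ 2 + x.2.1 ^ 2 - 2 * t * (x.1 * cos θ + x.2.1 * sin θ) + t ^ 2 := by
    simp only [heisCircle]
    linear_combination t ^ 2 * sin_sq_add_cos_sq θ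
  rw [hexp]
  obtain ⟨hd₁, hd₂⟩ := abs_le.1 hd
  constructor <;> nlinarith [mul_le_mul_of_nonneg_left hd₁ ht, mul_le_mul_of_nonneg_left hd₂ ht]

lemma abs_heisCircle_vertical_le {t r : ℝ} (ht : 0 ≤ t) (hr : 0 ≤ r) {x : ℝ × ℝ × ℝ}
    (hx : x.1 ^ 2 + x.2.1 ^ 2 ≤ r ^ 2) (θ : ℝ) :
    |(heisCircle t x θ).2.2| ≤ |x.2.2| + t * r := by
  have hd : |x.1 * sin θ - x.2.1 * cos θ| ≤ r := by
    refine abs_le_of_sq_le_sq' ?_ hr |> abs_le.2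
    nlinarith [sq_nonneg (x.1 * cos θ + x.2.1 * sin θ), sin_sq_add_cos_sq θ]
  calc |(heisCircle t x θ).2.2| = |x.2.2 + t * (x.1 * sin θ - x.2.1 * cos θ)| := by
        simp only [heisCircle]; ring_nf
    _ ≤ |x.2.2| + t * r := by
        grw [abs_add_le, abs_mul, abs_of_nonneg ht, hd]

lemma two_pi_le_heisMax_indicator_one {E : Set (ℝ × ℝ × ℝ)} (hE : MeasurableSet E) {t : ℝ}
    (ht : t ∈ Ioo 1 2) {x : ℝ × ℝ × ℝ} (hcirc : ∀ θ, heisCircle t x θ ∈ E) :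
    2 * π ≤ heisMax (E.indicator 1) x := by
  simpa [Real.volume_Ioc, two_pi_pos.le, pi_pos.le] using
    le_heisMax_indicator_one hE ht subset_rfl fun θ _ => hcirc θ

lemma heisCircle_polar (t θ₀ s x₃ : ℝ) :
    heisCircle t (t * cos θ₀, t * sin θ₀, x₃) (θ₀ + s) ∈
      {v | v.1 ^ 2 + v.2.1 ^ 2 = 2 * t ^ 2 * (1 - cos s) ∧ v.2.2 = x₃ + t ^ 2 * sin s} := by
  simp only [heisCircle, mem_ofPred_eq, cos_add, sin_add]
  constructor
  · linear_combination t ^ 2 * ((1 - cos s) ^ 2 + sin s ^ 2) * sin_sq_add_cos_sq θ₀ +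
      t ^ 2 * sin_sq_add_cos_sq s
  · linear_combination t ^ 2 * sin s * sin_sq_add_cos_sq θ₀

lemma div_four_le_heisMax_indicator_annularCylinder {δ : ℝ} (hδ : 0 < δ) (hδ₁ : δ ≤ 1)
    {x : ℝ × ℝ × ℝ}
    (hx : x ∈ Icc (-(1 / 10)) (1 / 10) ×ˢ Icc (6 / 5) (9 / 5) ×ˢ Icc (-(8 * δ)) (8 * δ)) :
    δ / 4 ≤ heisMax ((annularCylinder 0 δ (10 * δ)).indicator 1) x := by
  obtain ⟨⟨hx₁, hx₁'⟩, ⟨hx₂, hx₂'⟩, hx₃⟩ := hx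
  set z : ℂ := ⟨x.1, x.2.1⟩
  have hz : ‖z‖ ^ 2 = x.1 ^ 2 + x.2.1 ^ 2 := by
    rw [Complex.sq_norm, Complex.normSq_mk]; ring
  have ht : ‖z‖ ∈ Ioo 1 2 := by
    constructor <;> nlinarith [norm_nonneg z]
  have hpolar : x = (‖z‖ * cos z.arg, ‖z‖ * sin z.arg, x.2.2) := by
    rw [Complex.norm_mul_cos_arg, Complex.norm_mul_sin_arg]
  have harg : 0 ≤ z.arg := Complex.arg_nonneg_iff.2 (by simp only [z]; linarith)
  have hvol : (volume (Ioc z.arg (z.arg + δ / 4))).toReal = δ / 4 := by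
    rw [Real.volume_Ioc, add_sub_cancel_left, ENNReal.toReal_ofReal (by positivity)]
  rw [← hvol]
  refine le_heisMax_indicator_one (measurableSet_annularCylinder _ _ _) ht ?_ ?_
  · refine Ioc_subset_Ioc harg ?_
    linarith [Complex.arg_le_pi z, pi_gt_three]
  · intro θ hθ
    obtain ⟨hs₀, hs₁⟩ := hθ
    obtain ⟨hnorm, hvert⟩ := heisCircle_polar ‖z‖ z.arg (θ - z.arg) x.2.2
    rw [← hpolar, add_sub_cancel] at hnorm hvert
    have ht2 : ‖z‖ ^ 2 ≤ 4 := by nlinarith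
    have hcos := one_sub_sq_div_two_le_cos (x := θ - z.arg)
    have hsin : |sin (θ - z.arg)| ≤ δ / 4 :=
      abs_sin_le_abs.trans (abs_le.2 ⟨by linarith, by linarith⟩)
    refine mem_annularCylinder_zero.2 ⟨?_, ?_⟩
    · rw [hnorm]
      nlinarith [mul_le_mul_of_nonneg_left hcos (sq_nonneg ‖z‖)]
    · rw [hvert]
      calc |x.2.2 + ‖z‖ ^ 2 * sin (θ - z.arg)| ≤ 8 * δ + 4 * (δ / 4) := by
            grw [abs_add_le, abs_mul, abs_of_nonneg (sq_nonneg ‖z‖), ht2, hsin, abs_le.2 hx₃]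
        _ ≤ 10 * δ := by linarith

namespace RadialMaximalBound

variable {p q : ℝ≥0∞} {C : ℝ}

lemma inv_toReal_le (h : RadialMaximalBound p q C) (hq : q ≠ 0) :
    q.toReal⁻¹ ≤ p.toReal⁻¹ := by
  suffices (0 : ℕ) + (3 : ℕ) * q.toReal⁻¹ ≤ (3 : ℕ) * p.toReal⁻¹ by push_cast at this; linarith
  refine le_of_eventually_mul_pow_le_atTop (c := 2 * π) (k₁ := π / 8) (k₂ := 10 * π)
    (K := max C 0) (by positivity) (by positivity) (by positivity) ?_
  filter_upwards [eventually_ge_atTop 4] with R hR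
  have hGE : ∀ x ∈ annularCylinder 0 (R / 4) R, ∀ θ,
      heisCircle (3 / 2) x θ ∈ annularCylinder 0 R (5 * R) := by
    intro x hx θ
    rw [mem_annularCylinder_zero] at hx ⊢
    exact ⟨(heisCircle_planar_sq_mem_Icc (by norm_num) (by linarith) hx.1 θ).2.trans
        (by nlinarith),
      (abs_heisCircle_vertical_le (by norm_num) (by linarith) hx.1 θ).trans (by linarith)⟩
  rw [pow_zero, mul_one]
  refine h.mul_rpow_le hq (measurableSet_annularCylinder _ _ _)
    (heisRadial_indicator_annularCylinder _ _ _) ?_ (by positivity)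
    (measurableSet_annularCylinder _ _ _) ?_ (by positivity) (by positivity)
    fun x hx => two_pi_le_heisMax_indicator_one (measurableSet_annularCylinder _ _ _)
      (by norm_num) (hGE x hx)
  · rw [volume_annularCylinder le_rfl (by linarith)]
    ring_nf
  · rw [volume_annularCylinder le_rfl (by linarith)]
    ring_nf

lemma two_mul_inv_toReal_le (h : RadialMaximalBound p q C) (hq : q ≠ 0) :
    2 * p.toReal⁻¹ ≤ 3 * q.toReal⁻¹ := by
  suffices (2 : ℕ) * p.toReal⁻¹ ≤ (0 : ℕ) + (3 : ℕ) * q.toReal⁻¹ by push_cast at this; linarith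
  refine le_of_eventually_mul_pow_le_nhdsGT (c := 2 * π) (k₁ := π / 8) (k₂ := 36 * π)
    (K := max C 0) (by positivity) (by positivity) (by positivity) ?_
  filter_upwards [Ioo_mem_nhdsGT one_pos] with δ ⟨hδ, hδ₁⟩
  have hGE : ∀ x ∈ annularCylinder 0 (δ / 4) δ, ∀ θ,
      heisCircle (3 / 2) x θ ∈ annularCylinder (3 / 2 - δ) (3 / 2 + δ) (3 * δ) := by
    intro x hx θ
    rw [mem_annularCylinder_zero] at hx
    obtain ⟨hlo, hhi⟩ :=
      heisCircle_planar_sq_mem_Icc (t := 3 / 2) (r := δ / 4) (by norm_num) (by linarith) hx.1 θ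
    exact ⟨by nlinarith, by nlinarith,
      (abs_heisCircle_vertical_le (by norm_num) (by linarith) hx.1 θ).trans (by linarith)⟩
  rw [pow_zero, mul_one]
  refine h.mul_rpow_le hq (measurableSet_annularCylinder _ _ _)
    (heisRadial_indicator_annularCylinder _ _ _) ?_ (by positivity)
    (measurableSet_annularCylinder _ _ _) ?_ (by positivity) (by positivity)
    fun x hx => two_pi_le_heisMax_indicator_one (measurableSet_annularCylinder _ _ _)
      (by norm_num) (hGE x hx)
  · rw [volume_annularCylinder (by linarith) (by linarith)]
    ring_nf
  · rw [volume_annularCylinder le_rfl (by linarith)]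
    ring_nf

lemma three_mul_inv_toReal_le (h : RadialMaximalBound p q C) (hq : q ≠ 0) :
    3 * p.toReal⁻¹ ≤ 1 + q.toReal⁻¹ := by
  suffices (3 : ℕ) * p.toReal⁻¹ ≤ (1 : ℕ) + (1 : ℕ) * q.toReal⁻¹ by push_cast at this; linarith
  refine le_of_eventually_mul_pow_le_nhdsGT (c := 1 / 4) (k₁ := 48 / 25) (k₂ := 20 * π)
    (K := max C 0) (by positivity) (by positivity) (by positivity) ?_
  filter_upwards [Ioo_mem_nhdsGT one_pos] with δ ⟨hδ, hδ₁⟩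
  simp only [pow_one, one_div_mul_eq_div]
  refine h.mul_rpow_le hq (measurableSet_annularCylinder _ _ _)
    (heisRadial_indicator_annularCylinder _ _ _) ?_ (by positivity)
    (measurableSet_Icc.prod (measurableSet_Icc.prod measurableSet_Icc)) ?_ (by positivity)
    (by positivity) fun x hx => div_four_le_heisMax_indicator_annularCylinder hδ hδ₁.le hx
  · rw [volume_annularCylinder le_rfl hδ.le]
    ring_nf
  · rw [Measure.volume_eq_prod, Measure.prod_prod, Measure.volume_eq_prod, Measure.prod_prod,
      Real.volume_Icc, Real.volume_Icc, Real.volume_Icc, ← ENNReal.ofReal_mul (by norm_num),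
      ← ENNReal.ofReal_mul (by norm_num)]
    ring_nf

end RadialMaximalBound

lemma ENNReal.inv_eq_ofReal_inv_toReal {p : ℝ≥0∞} (hp : p ≠ 0) :
    p⁻¹ = ENNReal.ofReal p.toReal⁻¹ := by
  rw [← ENNReal.toReal_inv, ENNReal.ofReal_toReal (ENNReal.inv_ne_top.2 hp)]

/-- Necessity: if `M_{ℍ¹}` is bounded from `L^p` to `L^q` on Heisenberg radial functions,
then `p ≤ q`, `1 + 1/q ≥ 3/p` and `3/q ≥ 2/p`, i.e. `(1/p,1/q)` lies in the closed
triangle `T` with vertices `(0,0)`, `(1/2,1/2)`, `(3/7,2/7)`. -/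
theorem necessity_heisenberg_radial_maximal
    (p q : ℝ≥0∞) (hp : 1 ≤ p) (hq : 1 ≤ q) (C : ℝ)
    (hbdd : ∀ f : ℝ × ℝ × ℝ → ℂ, MemLp f p volume → HeisRadial f →
      eLpNorm (heisMax f) q volume ≤ ENNReal.ofReal C * eLpNorm f p volume) :
    p ≤ q ∧ 3/p ≤ 1 + 1/q ∧ 2/p ≤ 3/q := by
  have hp₀ : p ≠ 0 := (zero_lt_one.trans_le hp).ne'
  have hq₀ : q ≠ 0 := (zero_lt_one.trans_le hq).ne'
  have h : RadialMaximalBound p q C := hbdd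
  simp only [div_eq_mul_inv, one_mul]
  rw [← ENNReal.inv_le_inv, ENNReal.inv_eq_ofReal_inv_toReal hp₀,
    ENNReal.inv_eq_ofReal_inv_toReal hq₀, ← ENNReal.ofReal_one, ← ENNReal.ofReal_ofNat 2,
    ← ENNReal.ofReal_ofNat 3, ← ENNReal.ofReal_mul (by norm_num),
    ← ENNReal.ofReal_mul (by norm_num), ← ENNReal.ofReal_mul (by norm_num),
    ← ENNReal.ofReal_add zero_le_one (by positivity)]
  exact ⟨ENNReal.ofReal_le_ofReal (h.inv_toReal_le hq₀),
    ENNReal.ofReal_le_ofReal (h.three_mul_inv_toReal_le hq₀),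
    ENNReal.ofReal_le_ofReal (h.two_mul_inv_toReal_le hq₀)⟩
end
end

section
/- Let 1 ≤ p, q ≤ ∞ and suppose there is a constant C such that ‖M_{ℍ¹}f‖_{L^q(ℝ³)} ≤ C‖f‖_{L^p(ℝ³)} holds for every f ∈ L^p(ℝ³) (not necessarily Heisenberg radial). Then necessarily 1 + 2/q ≥ 4/p. (The example is f = characteristic function of {(x,x₃) : |x₁−1| < r², |x₂| < r, |x₃| < r}, for which M_{ℍ¹}f ≳ r on {−1 ≤ x₁ ≤ 0, |x₂| < cr, |x₃| < cr} for small c > 0.) -/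
open MeasureTheory Real Set
open scoped ENNReal

noncomputable section

/-!
Knapp example. The box `knappBox r = {|x₁ - 1| < r², |x₂| < r, |x₃| < r}` has volume `≍ r⁴`.
For `x` in `knappShadow r = {-1/2 < x₁ < -1/4, |x₂| < r/8, |x₃| < r/8}`, of volume `≍ r²`,
the twisted circle of radius `t = 1 - x₁ ∈ (1, 2)` around `x` passes through `(1, x₂, ·)` at
`θ = π`, where it is tangent to the `x₂`-direction, so for `|θ - π| < r/8` its first coordinate
stays within `O(r²)` of `1` and the other two within `O(r)` of `0`. Hence
`M_{ℍ¹} 1_{knappBox r} ≥ r/4` on `knappShadow r`, and the `L^p → L^q` bound gives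
`r · r^{2/q} ≲ r^{4/p}` for all small `r`, which forces `4/p ≤ 1 + 2/q`.
-/

open Filter Topology

lemma le_of_forall_mul_rpow_le_mul_rpow {a b A D : ℝ} (hA : 0 < A)
    (H : ∀ r : ℝ, 0 < r → r ≤ 1 → A * r ^ b ≤ D * r ^ a) : a ≤ b := by
  by_contra! hba
  have hab : 0 < a - b := sub_pos.2 hba
  have hlim : Tendsto (fun r : ℝ => D * r ^ (a - b)) (𝓝[>] 0) (𝓝 0) := by
    refine tendsto_nhdsWithin_of_tendsto_nhds ?_
    simpa [zero_rpow hab.ne'] using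
      (continuousAt_rpow_const 0 (a - b) (Or.inr hab.le)).tendsto.const_mul D
  have hA_le : ∀ᶠ r in 𝓝[>] (0 : ℝ), A ≤ D * r ^ (a - b) := by
    filter_upwards [Ioo_mem_nhdsGT one_pos] with r ⟨hr0, hr1⟩
    have hrb : 0 < r ^ b := rpow_pos_of_pos hr0 b
    refine le_of_mul_le_mul_right ?_ hrb
    calc A * r ^ b ≤ D * r ^ a := H r hr0 hr1.le
      _ = D * r ^ (a - b) * r ^ b := by rw [mul_assoc, ← rpow_add hr0, sub_add_cancel]
  linarith [ge_of_tendsto hlim hA_le]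

lemma ENNReal.div_le_one_add_div_of_toReal {a b p q : ℝ≥0∞} (ha : a ≠ ∞) (hb : b ≠ ∞)
    (hp : p ≠ 0) (hq : q ≠ 0) (h : a.toReal / p.toReal ≤ 1 + b.toReal / q.toReal) :
    a / p ≤ 1 + b / q := by
  have hbq : b / q ≠ ∞ := ENNReal.div_ne_top hb hq
  rwa [← ENNReal.toReal_le_toReal (ENNReal.div_ne_top ha hp)
    (ENNReal.add_ne_top.2 ⟨ENNReal.one_ne_top, hbq⟩), ENNReal.toReal_add ENNReal.one_ne_top hbq,
    ENNReal.toReal_div, ENNReal.toReal_div, ENNReal.toReal_one]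

lemma mul_pow_rpow {c r : ℝ} (hc : 0 ≤ c) (hr : 0 ≤ r) (n : ℕ) (s : ℝ) :
    (c * r ^ n) ^ s = c ^ s * r ^ (n * s) := by
  rw [mul_rpow hc (by positivity), ← rpow_natCast, ← rpow_mul hr]

lemma volume_Ioo_prod_Ioo_prod_Ioo {a b c d e f : ℝ} (hab : a ≤ b) (hcd : c ≤ d) :
    volume (Ioo a b ×ˢ Ioo c d ×ˢ Ioo e f) = ENNReal.ofReal ((b - a) * (d - c) * (f - e)) := by
  rw [Measure.volume_eq_prod, Measure.prod_prod, Measure.volume_eq_prod, Measure.prod_prod]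
  simp only [Real.volume_Ioo]
  rw [← ENNReal.ofReal_mul (sub_nonneg.2 hcd), ← ENNReal.ofReal_mul (sub_nonneg.2 hab), mul_assoc]

def twistedCircle (t : ℝ) (x : ℝ × ℝ × ℝ) (θ : ℝ) : ℝ × ℝ × ℝ :=
  (x.1 - t * cos θ, x.2.1 - t * sin θ, x.2.2 - t * (x.1 * (-sin θ) + x.2.1 * cos θ))

lemma continuous_twistedCircle (t : ℝ) (x : ℝ × ℝ × ℝ) : Continuous (twistedCircle t x) := by
  unfold twistedCircle; fun_prop

lemma heisAvg_indicator_one {s : Set (ℝ × ℝ × ℝ)} (hs : MeasurableSet s) (t : ℝ)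
    (x : ℝ × ℝ × ℝ) :
    heisAvg (s.indicator 1) t x = volume.real (Ioc 0 (2 * π) ∩ twistedCircle t x ⁻¹' s) := by
  have hpre : MeasurableSet (twistedCircle t x ⁻¹' s) :=
    hs.preimage (continuous_twistedCircle t x).measurable
  change ∫ θ in Ioc 0 (2 * π), s.indicator 1 (twistedCircle t x θ) = _
  simp_rw [← indicator_comp_right]
  rw [setIntegral_indicator hpre, Pi.one_comp]
  simp

lemma norm_heisAvg_le_heisMax {f : ℝ × ℝ × ℝ → ℂ} {M : ℝ} (hf : ∀ y, ‖f y‖ ≤ M) {t : ℝ}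
    (ht : t ∈ Ioo 1 2) (x : ℝ × ℝ × ℝ) : ‖heisAvg f t x‖ ≤ heisMax f x := by
  unfold heisMax
  refine le_ciSup₂ (f := fun s (_ : s ∈ Ioo (1 : ℝ) 2) => ‖heisAvg f s x‖)
    ⟨M * volume.real (Ioc (0 : ℝ) (2 * π)), ?_⟩ t ht
  simp only [mem_upperBounds, mem_iUnion, mem_range]
  rintro _ ⟨s, _, rfl⟩
  exact norm_setIntegral_le_of_norm_le_const measure_Ioc_lt_top fun θ _ => hf _

def knappBox (r : ℝ) : Set (ℝ × ℝ × ℝ) :=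
  Ioo (1 - r ^ 2) (1 + r ^ 2) ×ˢ Ioo (-r) r ×ˢ Ioo (-r) r

def knappShadow (r : ℝ) : Set (ℝ × ℝ × ℝ) :=
  Ioo (-(1 / 2)) (-(1 / 4)) ×ˢ Ioo (-(r / 8)) (r / 8) ×ˢ Ioo (-(r / 8)) (r / 8)

lemma measurableSet_knappBox (r : ℝ) : MeasurableSet (knappBox r) :=
  measurableSet_Ioo.prod (measurableSet_Ioo.prod measurableSet_Ioo)

lemma measurableSet_knappShadow (r : ℝ) : MeasurableSet (knappShadow r) :=
  measurableSet_Ioo.prod (measurableSet_Ioo.prod measurableSet_Ioo)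

lemma volume_knappBox {r : ℝ} (hr : 0 < r) :
    volume (knappBox r) = ENNReal.ofReal (8 * r ^ 4) := by
  rw [knappBox, volume_Ioo_prod_Ioo_prod_Ioo (by nlinarith) (by linarith)]
  ring_nf

lemma volume_knappShadow {r : ℝ} (hr : 0 < r) :
    volume (knappShadow r) = ENNReal.ofReal (1 / 64 * r ^ 2) := by
  rw [knappShadow, volume_Ioo_prod_Ioo_prod_Ioo (by norm_num) (by linarith)]
  ring_nf

lemma memLp_indicator_one_knappBox (p : ℝ≥0∞) {r : ℝ} (hr : 0 < r) :
    MemLp ((knappBox r).indicator (1 : ℝ × ℝ × ℝ → ℂ)) p volume :=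
  memLp_indicator_const p (measurableSet_knappBox r) 1
    (Or.inr (by rw [volume_knappBox hr]; exact ENNReal.ofReal_ne_top))

lemma twistedCircle_mem_knappBox {r θ : ℝ} {x : ℝ × ℝ × ℝ} (hr : 0 < r)
    (hx : x ∈ knappShadow r) (hθ : |θ - π| < r / 8) :
    twistedCircle (1 - x.1) x θ ∈ knappBox r := by
  obtain ⟨⟨hx₁, hx₁'⟩, ⟨hx₂, hx₂'⟩, ⟨hx₃, hx₃'⟩⟩ := hx
  have hsin : |sin θ| < r / 8 := by
    rw [← abs_neg, ← sin_sub_pi]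
    exact abs_sin_le_abs.trans_lt hθ
  have hcos : cos θ ≤ -1 + (r / 8) ^ 2 / 2 := by
    have hsq : (θ - π) ^ 2 < (r / 8) ^ 2 := by
      rw [← sq_abs]; exact pow_lt_pow_left₀ hθ (abs_nonneg _) two_ne_zero
    have := one_sub_sq_div_two_le_cos (x := θ - π)
    rw [cos_sub_pi] at this
    linarith
  have hw : |x.1 * (-sin θ) + x.2.1 * cos θ| < r / 4 := by
    have h₁ : |x.1| ≤ 1 / 2 := abs_le.2 ⟨by linarith, by linarith⟩
    have h₂ : |x.2.1| < r / 8 := abs_lt.2 ⟨hx₂, hx₂'⟩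
    calc |x.1 * (-sin θ) + x.2.1 * cos θ| ≤ |x.1| * |sin θ| + |x.2.1| * |cos θ| := by
          simpa only [abs_mul, abs_neg] using abs_add_le (x.1 * -sin θ) (x.2.1 * cos θ)
      _ ≤ 1 / 2 * (r / 8) + |x.2.1| * 1 := by
          have := hsin.le
          gcongr
          exact abs_cos_le_one θ
      _ < r / 4 := by linarith
  have ht : 1 - x.1 < 3 / 2 := by linarith
  have ht₀ : 0 < 1 - x.1 := by linarith
  obtain ⟨hs, hs'⟩ := abs_lt.1 hsin
  obtain ⟨hw, hw'⟩ := abs_lt.1 hw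
  simp only [twistedCircle, knappBox, mem_prod, mem_Ioo]
  refine ⟨⟨?_, ?_⟩, ⟨?_, ?_⟩, ?_, ?_⟩ <;>
    nlinarith [mul_le_mul_of_nonneg_left hcos ht₀.le, neg_one_le_cos θ]

lemma heisMax_indicator_knappBox_ge {r : ℝ} (hr : 0 < r) (hr₁ : r ≤ 1) {x : ℝ × ℝ × ℝ}
    (hx : x ∈ knappShadow r) : r / 4 ≤ heisMax ((knappBox r).indicator 1) x := by
  have ht : 1 - x.1 ∈ Ioo (1 : ℝ) 2 := ⟨by linarith [hx.1.2], by linarith [hx.1.1]⟩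
  have hle := norm_heisAvg_le_heisMax (f := (knappBox r).indicator 1) (M := 1)
    (fun y => (norm_indicator_le_norm_self _ y).trans_eq norm_one) ht x
  rw [heisAvg_indicator_one (measurableSet_knappBox r), Complex.norm_real, Real.norm_eq_abs,
    abs_of_nonneg measureReal_nonneg] at hle
  have harc : Ioo (π - r / 8) (π + r / 8) ⊆
      Ioc 0 (2 * π) ∩ twistedCircle (1 - x.1) x ⁻¹' knappBox r := by
    intro θ hθ
    have hθπ : |θ - π| < r / 8 := abs_sub_lt_iff.2 ⟨by linarith [hθ.2], by linarith [hθ.1]⟩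
    refine ⟨⟨?_, ?_⟩, twistedCircle_mem_knappBox hr hx hθπ⟩ <;>
      linarith [hθ.1, hθ.2, pi_gt_three]
  calc r / 4 = volume.real (Ioo (π - r / 8) (π + r / 8)) := by
        rw [Real.volume_real_Ioo_of_le (by linarith)]; ring
    _ ≤ volume.real (Ioc 0 (2 * π) ∩ twistedCircle (1 - x.1) x ⁻¹' knappBox r) :=
        measureReal_mono harc (measure_inter_lt_top_of_left_ne_top measure_Ioc_lt_top.ne).ne
    _ ≤ heisMax ((knappBox r).indicator 1) x := hle

lemma ofReal_mul_rpow_le_eLpNorm {α : Type*} [MeasurableSpace α] {μ : Measure α} {s : Set α}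
    {g : α → ℝ} {c : ℝ} {q : ℝ≥0∞} (hs : MeasurableSet s) (hμs : μ s ≠ 0) (hq : q ≠ 0)
    (hc : 0 ≤ c) (hg : ∀ x ∈ s, c ≤ g x) :
    ENNReal.ofReal c * μ s ^ (1 / q.toReal) ≤ eLpNorm g q μ := by
  rw [← Real.enorm_of_nonneg hc, ← eLpNorm_indicator_const' hs hμs hq]
  refine eLpNorm_mono fun x => ?_
  by_cases hx : x ∈ s
  · rw [indicator_of_mem hx, Real.norm_of_nonneg hc]
    exact (hg x hx).trans (le_abs_self _)
  · simp [indicator_of_notMem hx]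

lemma knapp_scaling {p q : ℝ≥0∞} {C r : ℝ} (hp : p ≠ 0) (hq : q ≠ 0) (hr : 0 < r) (hr₁ : r ≤ 1)
    (hbdd : eLpNorm (heisMax ((knappBox r).indicator 1)) q volume ≤
      ENNReal.ofReal C * eLpNorm ((knappBox r).indicator (1 : ℝ × ℝ × ℝ → ℂ)) p volume) :
    1 / 4 * (1 / 64) ^ (1 / q.toReal) * r ^ (1 + 2 / q.toReal) ≤
      max C 0 * 8 ^ (1 / p.toReal) * r ^ (4 / p.toReal) := by
  have hB : volume (knappBox r) ≠ 0 := by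
    rw [volume_knappBox hr]; simp; positivity
  have hS : volume (knappShadow r) ≠ 0 := by
    rw [volume_knappShadow hr]; simp; positivity
  have key : ENNReal.ofReal (r / 4) * volume (knappShadow r) ^ (1 / q.toReal) ≤
      ENNReal.ofReal C * volume (knappBox r) ^ (1 / p.toReal) := by
    calc _ ≤ eLpNorm (heisMax ((knappBox r).indicator 1)) q volume :=
          ofReal_mul_rpow_le_eLpNorm (measurableSet_knappShadow r) hS hq (by positivity)
            fun x hx => heisMax_indicator_knappBox_ge hr hr₁ hx
      _ ≤ _ := hbdd
      _ = _ := by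
          rw [Pi.one_def, eLpNorm_indicator_const' (measurableSet_knappBox r) hB hp]
          simp
  rw [volume_knappShadow hr, volume_knappBox hr] at key
  have hreal := ENNReal.toReal_mono (by finiteness) key
  simp only [ENNReal.toReal_mul, ← ENNReal.toReal_rpow, ENNReal.toReal_ofReal'] at hreal
  rw [max_eq_left (by positivity : 0 ≤ r / 4), max_eq_left (by positivity : 0 ≤ 1 / 64 * r ^ 2),
    max_eq_left (by positivity : 0 ≤ 8 * r ^ 4), mul_pow_rpow (by norm_num) hr.le,
    mul_pow_rpow (by norm_num) hr.le] at hreal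
  convert hreal using 1 <;> push_cast
  · rw [rpow_add hr, rpow_one]; ring_nf
  · ring_nf

/-- Necessity for general (not necessarily Heisenberg radial) functions: if `M_{ℍ¹}`
is bounded from `L^p(ℝ³)` to `L^q(ℝ³)`, then `1 + 2/q ≥ 4/p`. -/
theorem necessity_heisenberg_maximal_general
    (p q : ℝ≥0∞) (hp : 1 ≤ p) (hq : 1 ≤ q) (C : ℝ)
    (hbdd : ∀ f : ℝ × ℝ × ℝ → ℂ, MemLp f p volume →
      eLpNorm (heisMax f) q volume ≤ ENNReal.ofReal C * eLpNorm f p volume) :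
    4/p ≤ 1 + 2/q := by
  have hp₀ : p ≠ 0 := (zero_lt_one.trans_le hp).ne'
  have hq₀ : q ≠ 0 := (zero_lt_one.trans_le hq).ne'
  refine ENNReal.div_le_one_add_div_of_toReal (by simp) (by simp) hp₀ hq₀ ?_
  rw [ENNReal.toReal_ofNat, ENNReal.toReal_ofNat]
  exact le_of_forall_mul_rpow_le_mul_rpow (by positivity) fun r hr hr₁ =>
    knapp_scaling hp₀ hq₀ hr hr₁ (hbdd _ (memLp_indicator_one_knappBox p hr))

end
end

section
/- Let I ⊂ ℝ be a bounded interval, n ≥ 1, and 1 ≤ p < ∞. Then there is a constant C depending only on p such that for every smooth function F on ℝⁿ × I for which the right-hand side is finite, ‖sup_{t∈I} |F(x,t)|‖_{L^p_x(ℝⁿ)} ≤ C ( |I|^{−1/p} ‖F‖_{L^p(ℝⁿ×I)} + ‖F‖_{L^p(ℝⁿ×I)}^{(p−1)/p} ‖∂_t F‖_{L^p(ℝⁿ×I)}^{1/p} ). -/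
open MeasureTheory Real Set Filter
open scoped ENNReal Topology

noncomputable section

lemma ofReal_norm_eq_coe_nnnorm {E : Type*} [SeminormedAddCommGroup E] (a : E) :
    ENNReal.ofReal ‖a‖ = (‖a‖₊ : ℝ≥0∞) :=
  ofReal_norm a

lemma slice_bound {p : ℝ} (hp : 1 ≤ p) {a b : ℝ} (hab : a < b) {f : ℝ → ℂ}
    (hf : ContinuousOn f (Set.Icc a b))
    (hd : ∀ t ∈ Set.Ioo a b, DifferentiableAt ℝ f t)
    (hd' : ContinuousOn (deriv f) (Set.Ioo a b))
    {M : ℝ} (hM : ∀ t ∈ Set.Ioo a b, ‖deriv f t‖ ≤ M) :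
    ∀ t₀ ∈ Set.Icc a b, ‖f t₀‖ ^ p ≤
      (b - a)⁻¹ * (∫ t in Set.Icc a b, ‖f t‖ ^ p) +
        p * ∫ t in Set.Icc a b, ‖f t‖ ^ (p - 1) * ‖deriv f t‖ := by
  intro t₀ ht₀
  have hab' : (0:ℝ) < b - a := sub_pos.2 hab
  have hp0 : (0:ℝ) < p := lt_of_lt_of_le zero_lt_one hp
  set μI := volume.restrict (Set.Icc a b) with hμI
  have hμIoo : μI = volume.restrict (Set.Ioo a b) :=
    (Measure.restrict_congr_set (Ioo_ae_eq_Icc)).symm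
  have hvol : volume (Set.Icc a b) < ∞ := by
    rw [Real.volume_Icc]; exact ENNReal.ofReal_lt_top
  have haeIcc : ∀ᵐ t ∂μI, t ∈ Set.Icc a b := ae_restrict_mem measurableSet_Icc
  have haeIoo : ∀ᵐ t ∂μI, t ∈ Set.Ioo a b := by
    rw [hμIoo]; exact ae_restrict_mem measurableSet_Ioo
  have haesm : ∀ (u : ℝ → ℝ), ContinuousOn u (Set.Ioo a b) → AEStronglyMeasurable u μI := by
    intro u hu
    rw [hμIoo]; exact hu.aestronglyMeasurable measurableSet_Ioo
  have hIntOfBdd : ∀ (u : ℝ → ℝ) (C : ℝ), ContinuousOn u (Set.Ioo a b) →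
      (∀ᵐ t ∂μI, ‖u t‖ ≤ C) → IntegrableOn u (Set.Icc a b) volume := by
    intro u C hu hb
    exact ⟨haesm u hu, HasFiniteIntegral.restrict_of_bounded (C := C) hvol hb⟩
  set h : ℝ → ℝ := fun t => ‖f t‖ with hh
  set φ : ℝ → ℝ := fun t => ‖deriv f t‖ with hφ
  have hh0 : ∀ t, 0 ≤ h t := fun t => norm_nonneg _
  have hφ0 : ∀ t, 0 ≤ φ t := fun t => norm_nonneg _
  set q : ℝ → ℝ := fun t => (f t).re ^ 2 + (f t).im ^ 2 with hq
  have hq0 : ∀ t, 0 ≤ q t := fun t => by positivity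
  have hqf : ∀ t, q t = h t ^ (2:ℕ) := by
    intro t
    simp only [hq, hh, Complex.sq_norm, Complex.normSq_apply]
    ring
  have hqpow : ∀ (t : ℝ) (e : ℝ), (q t) ^ (e / 2) = h t ^ e := by
    intro t e
    rw [hqf t, ← Real.rpow_natCast (h t) 2, ← Real.rpow_mul (hh0 t)]
    congr 1
    ring
  have hq_cont : ContinuousOn q (Set.Icc a b) := by
    have hre : ContinuousOn (fun t => (f t).re) (Set.Icc a b) :=
      Complex.continuous_re.comp_continuousOn hf
    have him : ContinuousOn (fun t => (f t).im) (Set.Icc a b) :=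
      Complex.continuous_im.comp_continuousOn hf
    exact (hre.pow 2).add (him.pow 2)
  obtain ⟨Mq, hMq⟩ : ∃ Mq, ∀ t ∈ Set.Icc a b, q t ≤ Mq := by
    obtain ⟨Mq, hMq⟩ := isCompact_Icc.exists_bound_of_continuousOn hq_cont
    exact ⟨Mq, fun t ht => (le_abs_self _).trans (hMq t ht)⟩
  have hMq0 : 0 ≤ Mq := le_trans (hq0 a) (hMq a (Set.left_mem_Icc.2 hab.le))
  have hM0 : 0 ≤ M := le_trans (hφ0 _) (hM ((a+b)/2) ⟨by linarith, by linarith⟩)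
  set q' : ℝ → ℝ := fun t => 2 * ((f t).re * (deriv f t).re) + 2 * ((f t).im * (deriv f t).im)
    with hq'
  have hq'd : ∀ t ∈ Set.Ioo a b, HasDerivAt q (q' t) t := by
    intro t ht
    have hft : HasDerivAt f (deriv f t) t := (hd t ht).hasDerivAt
    have hre : HasDerivAt (fun s => (f s).re) ((deriv f t).re) t :=
      (Complex.reCLM.hasFDerivAt.comp_hasDerivAt t hft)
    have him : HasDerivAt (fun s => (f s).im) ((deriv f t).im) t :=
      (Complex.imCLM.hasFDerivAt.comp_hasDerivAt t hft)
    have := ((hre.pow 2).add (him.pow 2))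
    refine this.congr_deriv ?_
    push_cast
    ring
  have hq'_le : ∀ t, |q' t| ≤ 2 * (h t * φ t) := by
    intro t
    have heq : q' t = 2 * (f t * (starRingEnd ℂ) (deriv f t)).re := by
      simp only [hq', Complex.mul_re, Complex.conj_re, Complex.conj_im]
      ring
    rw [heq, abs_mul, abs_two]
    have h1 : |(f t * (starRingEnd ℂ) (deriv f t)).re| ≤ h t * φ t := by
      refine (Complex.abs_re_le_norm _).trans ?_
      rw [norm_mul, Complex.norm_conj]
    nlinarith [h1]
  have hq'_cont : ContinuousOn q' (Set.Ioo a b) := by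
    have hre : ContinuousOn (fun t => (f t).re) (Set.Ioo a b) :=
      Complex.continuous_re.comp_continuousOn (hf.mono Set.Ioo_subset_Icc_self)
    have him : ContinuousOn (fun t => (f t).im) (Set.Ioo a b) :=
      Complex.continuous_im.comp_continuousOn (hf.mono Set.Ioo_subset_Icc_self)
    have hre' : ContinuousOn (fun t => (deriv f t).re) (Set.Ioo a b) :=
      Complex.continuous_re.comp_continuousOn hd'
    have him' : ContinuousOn (fun t => (deriv f t).im) (Set.Ioo a b) :=
      Complex.continuous_im.comp_continuousOn hd'
    exact ((continuousOn_const.mul (hre.mul hre')).add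
      (continuousOn_const.mul (him.mul him')))
  have hIhp : IntegrableOn (fun t => h t ^ p) (Set.Icc a b) volume :=
    ContinuousOn.integrableOn_Icc ((hf.norm).rpow_const (fun t _ => Or.inr hp0.le))
  have hφ_cont : ContinuousOn φ (Set.Ioo a b) := hd'.norm
  have hIB : IntegrableOn (fun t => h t ^ (p-1) * φ t) (Set.Icc a b) volume := by
    apply hIntOfBdd _ (Mq ^ ((p-1)/2) * M)
    · exact (((hf.mono Set.Ioo_subset_Icc_self).norm.rpow_const
        (fun t _ => Or.inr (by linarith))).mul hφ_cont)
    · filter_upwards [haeIcc, haeIoo] with t ht ht'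
      rw [Real.norm_eq_abs, abs_of_nonneg (by positivity)]
      have h1 : h t ^ (p-1) ≤ Mq ^ ((p-1)/2) := by
        calc h t ^ (p-1) = (q t) ^ ((p-1)/2) := (hqpow t (p-1)).symm
        _ ≤ Mq ^ ((p-1)/2) := Real.rpow_le_rpow (hq0 t) (hMq t ht) (by linarith)
      exact mul_le_mul h1 (hM t ht') (hφ0 t) (by positivity)
  -- the ε-regularized claim
  have claim1 : ∀ ε : ℝ, 0 < ε → ε ≤ 1 →
      (q t₀ + ε) ^ (p/2) ≤
        (b - a)⁻¹ * (∫ t in Set.Icc a b, (q t + ε) ^ (p/2)) +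
          p * ∫ t in Set.Icc a b, (q t + ε) ^ ((p-1)/2) * φ t := by
    intro ε hε hε1
    set G : ℝ → ℝ := fun t => (q t + ε) ^ (p/2) with hG
    set G' : ℝ → ℝ := fun t => q' t * (p/2) * (q t + ε) ^ (p/2 - 1) with hG'
    set ψ : ℝ → ℝ := fun t => p * ((q t + ε) ^ ((p-1)/2) * φ t) with hψ
    have hqε : ∀ t, 0 < q t + ε := fun t => by positivity
    have hGd : ∀ t ∈ Set.Ioo a b, HasDerivAt G (G' t) t := by
      intro t ht
      exact ((hq'd t ht).add_const ε).rpow_const (Or.inl (hqε t).ne')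
    have hψ0 : ∀ t, 0 ≤ ψ t := fun t => by
      have := Real.rpow_nonneg (hqε t).le ((p-1)/2)
      have := hφ0 t
      positivity
    have hG'_le : ∀ t, |G' t| ≤ ψ t := by
      intro t
      have h1 : |G' t| = |q' t| * (p/2) * (q t + ε) ^ (p/2 - 1) := by
        rw [hG']
        rw [abs_mul, abs_mul, abs_of_nonneg (by positivity : (0:ℝ) ≤ p/2),
          abs_of_nonneg (Real.rpow_nonneg (hqε t).le _)]
      rw [h1]
      have h3 : h t ≤ (q t + ε) ^ ((1:ℝ)/2) := by
        calc h t = (q t) ^ ((1:ℝ)/2) := by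
              rw [hqpow t 1, Real.rpow_one]
        _ ≤ (q t + ε) ^ ((1:ℝ)/2) :=
              Real.rpow_le_rpow (hq0 t) (by linarith) (by norm_num)
      have h4 : (q t + ε) ^ ((1:ℝ)/2) * (q t + ε) ^ (p/2 - 1) = (q t + ε) ^ ((p-1)/2) := by
        rw [← Real.rpow_add (hqε t)]
        congr 1
        ring
      have h5 : |q' t| * (p/2) * (q t + ε) ^ (p/2 - 1)
          ≤ (2 * (h t * φ t)) * (p/2) * (q t + ε) ^ (p/2 - 1) :=
        mul_le_mul_of_nonneg_right (mul_le_mul_of_nonneg_right (hq'_le t) (by positivity))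
          (Real.rpow_nonneg (hqε t).le _)
      refine h5.trans ?_
      rw [hψ]
      calc 2 * (h t * φ t) * (p/2) * (q t + ε) ^ (p/2 - 1)
          = p * ((h t * (q t + ε) ^ (p/2 - 1)) * φ t) := by ring
        _ ≤ p * (((q t + ε) ^ ((1:ℝ)/2) * (q t + ε) ^ (p/2 - 1)) * φ t) := by
            have h6 : (0:ℝ) ≤ (q t + ε) ^ (p/2 - 1) := Real.rpow_nonneg (hqε t).le _
            have h7 := hφ0 t
            exact mul_le_mul_of_nonneg_left (mul_le_mul_of_nonneg_right
              (mul_le_mul_of_nonneg_right h3 h6) h7) hp0.le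
        _ = p * ((q t + ε) ^ ((p-1)/2) * φ t) := by rw [h4]
    -- integrability of G' and ψ on [a,b]
    have hG'bd : ∀ t ∈ Set.Icc a b, ∀ t' ∈ Set.Ioo a b, True := fun _ _ _ _ => trivial
    have hψbd : ∀ᵐ t ∂μI, ‖ψ t‖ ≤ p * ((Mq + 1) ^ ((p-1)/2) * M) := by
      filter_upwards [haeIcc, haeIoo] with t ht ht'
      rw [Real.norm_eq_abs, abs_of_nonneg (hψ0 t)]
      have h1 : (q t + ε) ^ ((p-1)/2) ≤ (Mq + 1) ^ ((p-1)/2) := by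
        apply Real.rpow_le_rpow (hqε t).le _ (by linarith)
        have := hMq t ht; linarith
      have h2 : (q t + ε) ^ ((p-1)/2) * φ t ≤ (Mq + 1) ^ ((p-1)/2) * M :=
        mul_le_mul h1 (hM t ht') (hφ0 t) (by positivity)
      exact mul_le_mul_of_nonneg_left h2 hp0.le
    have hψ_cont : ContinuousOn ψ (Set.Ioo a b) := by
      apply continuousOn_const.mul
      apply ContinuousOn.mul _ hφ_cont
      exact ((hq_cont.mono Set.Ioo_subset_Icc_self).add continuousOn_const).rpow_const
        (fun t _ => Or.inl (hqε t).ne')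
    have hIψ : IntegrableOn ψ (Set.Icc a b) volume :=
      hIntOfBdd _ _ hψ_cont hψbd
    have hG'_cont : ContinuousOn G' (Set.Ioo a b) := by
      apply ContinuousOn.mul (hq'_cont.mul continuousOn_const)
      exact (((hq_cont.mono Set.Ioo_subset_Icc_self).add continuousOn_const).rpow_const
        (fun t _ => Or.inl (hqε t).ne'))
    have hIG' : IntegrableOn G' (Set.Icc a b) volume := by
      apply hIntOfBdd _ (p * ((Mq + 1) ^ ((p-1)/2) * M)) hG'_cont
      filter_upwards [hψbd] with t ht
      rw [Real.norm_eq_abs]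
      exact le_trans (hG'_le t) (by rw [Real.norm_eq_abs, abs_of_nonneg (hψ0 t)] at ht; exact ht)
    have hG_cont : ContinuousOn G (Set.Icc a b) :=
      (hq_cont.add continuousOn_const).rpow_const (fun t _ => Or.inl (hqε t).ne')
    have hIG : IntegrableOn G (Set.Icc a b) volume :=
      hG_cont.integrableOn_Icc
    -- the two-point estimate
    have key : ∀ u v : ℝ, u ∈ Set.Icc a b → v ∈ Set.Icc a b → u ≤ v →
        |G v - G u| ≤ ∫ t in Set.Icc a b, ψ t := by
      intro u v hu hv huv
      have hsub : Set.Icc u v ⊆ Set.Icc a b := Set.Icc_subset_Icc hu.1 hv.2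
      have hsub' : Set.Ioo u v ⊆ Set.Ioo a b := Set.Ioo_subset_Ioo hu.1 hv.2
      have hG'int : IntervalIntegrable G' volume u v := by
        apply IntegrableOn.intervalIntegrable
        apply hIG'.mono_set
        rw [Set.uIcc_of_le huv]; exact hsub
      have hψint : IntervalIntegrable ψ volume u v := by
        apply IntegrableOn.intervalIntegrable
        apply hIψ.mono_set
        rw [Set.uIcc_of_le huv]; exact hsub
      have hFTC : ∫ t in u..v, G' t = G v - G u :=
        intervalIntegral.integral_eq_sub_of_hasDerivAt_of_le huv
          (hG_cont.mono hsub) (fun t ht => hGd t (hsub' ht)) hG'int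
      rw [← hFTC]
      calc |∫ t in u..v, G' t| ≤ ∫ t in u..v, |G' t| :=
            intervalIntegral.abs_integral_le_integral_abs huv
        _ ≤ ∫ t in u..v, ψ t := by
            apply intervalIntegral.integral_mono_on huv hG'int.abs hψint
            intro t _; exact hG'_le t
        _ = ∫ t in Set.Ioc u v, ψ t := intervalIntegral.integral_of_le huv
        _ ≤ ∫ t in Set.Icc a b, ψ t := by
            apply setIntegral_mono_set hIψ
            · exact Filter.Eventually.of_forall hψ0
            · exact HasSubset.Subset.eventuallyLE ((Set.Ioc_subset_Icc_self).trans hsub)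
    have keypt : ∀ s ∈ Set.Icc a b, G t₀ ≤ G s + ∫ t in Set.Icc a b, ψ t := by
      intro s hs
      rcases le_total s t₀ with hc | hc
      · have := key s t₀ hs ht₀ hc
        have h2 := le_of_abs_le this
        linarith
      · have := key t₀ s ht₀ hs hc
        have h2 := neg_le_of_abs_le this
        linarith
    -- integrate in s
    have havg : (b - a) * (G t₀ - ∫ t in Set.Icc a b, ψ t) ≤ ∫ s in Set.Icc a b, G s := by
      have h1 : ∫ _ in Set.Icc a b, (G t₀ - ∫ t in Set.Icc a b, ψ t) ∂volume
          ≤ ∫ s in Set.Icc a b, G s := by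
        apply setIntegral_mono_on (integrableOn_const hvol.ne) hIG measurableSet_Icc
        intro s hs
        have := keypt s hs
        linarith
      rwa [setIntegral_const, Real.volume_real_Icc, max_eq_left hab'.le,
        smul_eq_mul] at h1
    have hψeq : ∫ t in Set.Icc a b, ψ t = p * ∫ t in Set.Icc a b, (q t + ε) ^ ((p-1)/2) * φ t := by
      simp only [hψ]
      rw [integral_const_mul]
    have : G t₀ - ∫ t in Set.Icc a b, ψ t ≤ (b - a)⁻¹ * ∫ s in Set.Icc a b, G s := by
      rw [le_inv_mul_iff₀ hab']
      linarith [havg]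
    rw [hψeq] at this
    have hGt₀ : G t₀ = (q t₀ + ε) ^ (p/2) := rfl
    linarith [this]
  -- take ε = 1/(n+1) → 0
  haveI : IsFiniteMeasure μI := ⟨by rw [hμI, Measure.restrict_apply_univ]; exact hvol⟩
  set ε : ℕ → ℝ := fun n => 1/((n:ℝ)+1) with hεdef
  have hεpos : ∀ n, 0 < ε n := fun n => by positivity
  have hεle1 : ∀ n, ε n ≤ 1 := fun n => by
    rw [hεdef, div_le_one (by positivity)]
    simp [Nat.cast_nonneg]
  have htendε : Tendsto ε atTop (𝓝 0) := tendsto_one_div_add_atTop_nhds_zero_nat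
  have hseq : ∀ n : ℕ,
      h t₀ ^ p ≤ (b-a)⁻¹ * (∫ t in Set.Icc a b, (q t + ε n) ^ (p/2)) +
        p * ∫ t in Set.Icc a b, (q t + ε n) ^ ((p-1)/2) * φ t := by
    intro n
    refine le_trans ?_ (claim1 (ε n) (hεpos n) (hεle1 n))
    calc h t₀ ^ p = (q t₀) ^ (p/2) := (hqpow t₀ p).symm
      _ ≤ (q t₀ + ε n) ^ (p/2) :=
          Real.rpow_le_rpow (hq0 t₀) (by linarith [hεpos n]) (by positivity)
  have hbase : ∀ t, Tendsto (fun n => q t + ε n) atTop (𝓝 (q t)) := by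
    intro t
    simpa using (tendsto_const_nhds.add htendε)
  have hIn : Tendsto (fun n => ∫ t in Set.Icc a b, (q t + ε n) ^ (p/2)) atTop
      (𝓝 (∫ t in Set.Icc a b, h t ^ p)) := by
    apply tendsto_integral_of_dominated_convergence (fun _ => (Mq + 1) ^ (p/2))
    · intro n
      exact ((hq_cont.add continuousOn_const).rpow_const
        (fun t _ => Or.inr (by positivity))).aestronglyMeasurable measurableSet_Icc
    · exact integrable_const _
    · intro n
      filter_upwards [haeIcc] with t ht
      rw [Real.norm_eq_abs, abs_of_nonneg (Real.rpow_nonneg (by positivity) _)]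
      apply Real.rpow_le_rpow (by positivity) _ (by positivity)
      have := hMq t ht; have := hεle1 n; linarith
    · filter_upwards with t
      have hc : ContinuousAt (fun x : ℝ => x ^ (p/2)) (q t) :=
        Real.continuousAt_rpow_const (q t) (p/2) (Or.inr (by positivity))
      have := hc.tendsto.comp (hbase t)
      simpa [Function.comp_def, hqpow t p] using this
  have hJn : Tendsto (fun n => ∫ t in Set.Icc a b, (q t + ε n) ^ ((p-1)/2) * φ t) atTop
      (𝓝 (∫ t in Set.Icc a b, h t ^ (p-1) * φ t)) := by
    apply tendsto_integral_of_dominated_convergence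
      (fun _ => (Mq + 1) ^ ((p-1)/2) * M)
    · intro n
      apply haesm
      exact (((hq_cont.mono Set.Ioo_subset_Icc_self).add continuousOn_const).rpow_const
        (fun t _ => Or.inr (by linarith))).mul hφ_cont
    · exact integrable_const _
    · intro n
      filter_upwards [haeIcc, haeIoo] with t ht ht'
      have h0 : (0:ℝ) ≤ (q t + ε n) ^ ((p-1)/2) := Real.rpow_nonneg (by positivity) _
      rw [Real.norm_eq_abs, abs_of_nonneg (by positivity)]
      apply mul_le_mul _ (hM t ht') (hφ0 t) (by positivity)
      apply Real.rpow_le_rpow (by positivity) _ (by linarith)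
      have := hMq t ht; have := hεle1 n; linarith
    · filter_upwards with t
      have hc : ContinuousAt (fun x : ℝ => x ^ ((p-1)/2)) (q t) :=
        Real.continuousAt_rpow_const (q t) ((p-1)/2) (Or.inr (by linarith))
      have h1 := (hc.tendsto.comp (hbase t)).mul_const (φ t)
      simpa [hqpow t (p-1)] using h1
  have hlim : Tendsto (fun n => (b-a)⁻¹ * (∫ t in Set.Icc a b, (q t + ε n) ^ (p/2)) +
      p * ∫ t in Set.Icc a b, (q t + ε n) ^ ((p-1)/2) * φ t) atTop
      (𝓝 ((b-a)⁻¹ * (∫ t in Set.Icc a b, h t ^ p) +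
        p * ∫ t in Set.Icc a b, h t ^ (p-1) * φ t)) :=
    (hIn.const_mul _).add (hJn.const_mul _)
  exact ge_of_tendsto' hlim hseq

lemma perx {p : ℝ} (hp : 1 ≤ p) {n : ℕ} {a b : ℝ} (hab : a < b)
    {F : (Fin n → ℝ) × ℝ → ℂ}
    (hF : ContDiffOn ℝ (⊤ : ℕ∞) F (Set.univ ×ˢ Set.Icc a b)) (x : Fin n → ℝ) :
    ∀ t₀ ∈ Set.Icc a b, ‖F (x, t₀)‖ ^ p ≤
      (b - a)⁻¹ * (∫ t in Set.Icc a b, ‖F (x, t)‖ ^ p) +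
        p * ∫ t in Set.Icc a b,
          ‖F (x, t)‖ ^ (p - 1) * ‖deriv (fun s => F (x, s)) t‖ := by
  set S : Set ((Fin n → ℝ) × ℝ) := Set.univ ×ˢ Set.Icc a b with hS
  set U : Set ((Fin n → ℝ) × ℝ) := Set.univ ×ˢ Set.Ioo a b with hU
  have hUopen : IsOpen U := isOpen_univ.prod isOpen_Ioo
  have hUS : U ⊆ S := Set.prod_mono (le_refl _) Set.Ioo_subset_Icc_self
  have hSnhds : ∀ z ∈ U, S ∈ 𝓝 z := fun z hz =>
    Filter.mem_of_superset (hUopen.mem_nhds hz) hUS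
  have hdiff : ∀ z ∈ U, DifferentiableAt ℝ F z := fun z hz =>
    (hF.contDiffAt (hSnhds z hz)).differentiableAt (by simp)
  have hcurve : ∀ (x : Fin n → ℝ) (t : ℝ),
      HasDerivAt (fun s : ℝ => (x, s)) (((0 : Fin n → ℝ), (1 : ℝ))) t := fun x t =>
    HasDerivAt.prodMk (hasDerivAt_const t x) (hasDerivAt_id t)
  have hslice : ∀ t ∈ Set.Ioo a b,
      HasDerivAt (fun s => F (x, s)) (fderiv ℝ F (x, t) ((0 : Fin n → ℝ), (1 : ℝ))) t := by
    intro t ht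
    have hz : ((x, t) : (Fin n → ℝ) × ℝ) ∈ U := ⟨Set.mem_univ _, ht⟩
    exact ((hdiff _ hz).hasFDerivAt.comp_hasDerivAt t (hcurve x t))
  have hDeq : ∀ t ∈ Set.Ioo a b,
      deriv (fun s => F (x, s)) t = fderiv ℝ F (x, t) ((0 : Fin n → ℝ), (1 : ℝ)) := by
    intro t ht
    exact (hslice t ht).deriv
  have hSud : UniqueDiffOn ℝ S := uniqueDiffOn_univ.prod (uniqueDiffOn_Icc hab)
  have hfwcont : ContinuousOn (fderivWithin ℝ F S) S :=
    hF.continuousOn_fderivWithin hSud (by simp)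
  have hfw : ∀ z ∈ U, fderivWithin ℝ F S z = fderiv ℝ F z := fun z hz =>
    fderivWithin_of_mem_nhds (hSnhds z hz)
  -- continuity of slice
  have hf : ContinuousOn (fun t => F (x, t)) (Set.Icc a b) := by
    apply hF.continuousOn.comp (Continuous.continuousOn (by fun_prop))
    intro t ht
    exact ⟨Set.mem_univ _, ht⟩
  have hd : ∀ t ∈ Set.Ioo a b, DifferentiableAt ℝ (fun t => F (x, t)) t :=
    fun t ht => (hslice t ht).differentiableAt
  have hd' : ContinuousOn (deriv (fun s => F (x, s))) (Set.Ioo a b) := by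
    have h1 : ContinuousOn (fun t : ℝ => fderivWithin ℝ F S (x, t)
        ((0 : Fin n → ℝ), (1 : ℝ))) (Set.Ioo a b) := by
      apply ContinuousOn.clm_apply _ continuousOn_const
      apply (hfwcont.mono hUS).comp (Continuous.continuousOn (by fun_prop))
      intro t ht
      exact ⟨Set.mem_univ _, ht⟩
    apply h1.congr
    intro t ht
    rw [hDeq t ht, ← hfw (x, t) ⟨Set.mem_univ _, ht⟩]
  -- boundedness of the slice derivative
  obtain ⟨M, hM⟩ := (isCompact_singleton.prod isCompact_Icc).exists_bound_of_continuousOn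
    (hfwcont.mono (Set.prod_mono (Set.singleton_subset_iff.2 (Set.mem_univ x)) (le_refl _)))
  have hMbd : ∀ t ∈ Set.Ioo a b, ‖deriv (fun s => F (x, s)) t‖
      ≤ M * ‖((0 : Fin n → ℝ), (1 : ℝ))‖ := by
    intro t ht
    rw [hDeq t ht, ← hfw (x, t) ⟨Set.mem_univ _, ht⟩]
    calc ‖fderivWithin ℝ F S (x, t) ((0 : Fin n → ℝ), (1 : ℝ))‖
        ≤ ‖fderivWithin ℝ F S (x, t)‖ * ‖((0 : Fin n → ℝ), (1 : ℝ))‖ :=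
          ContinuousLinearMap.le_opNorm _ _
      _ ≤ M * ‖((0 : Fin n → ℝ), (1 : ℝ))‖ := by
          apply mul_le_mul_of_nonneg_right _ (norm_nonneg _)
          exact hM (x, t) ⟨rfl, Set.mem_Icc.2 ⟨ht.1.le, ht.2.le⟩⟩
  exact slice_bound hp hab hf hd hd' hMbd

/-- Lemma 2.4 (a Sobolev-type embedding in the `t` variable): for `1 ≤ p < ∞` there is a
constant `C = C(p)` such that for every `n ≥ 1`, every bounded interval `I = [a,b]` and
every smooth `F` on `ℝⁿ × I` with finite right-hand side,
`‖sup_{t∈I} |F(x,t)|‖_{L^p_x} ≤ C(|I|^{-1/p}‖F‖_p + ‖F‖_p^{(p−1)/p} ‖∂_t F‖_p^{1/p})`,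
the norms on the right being taken on `ℝⁿ × I`. -/
theorem sup_in_t_sobolev (p : ℝ) (hp : 1 ≤ p) :
    ∃ C : ℝ, 0 < C ∧
      ∀ (n : ℕ), 1 ≤ n → ∀ a b : ℝ, a < b →
        ∀ F : (Fin n → ℝ) × ℝ → ℂ,
          ContDiffOn ℝ (⊤ : ℕ∞) F (Set.univ ×ˢ Set.Icc a b) →
          eLpNorm F (ENNReal.ofReal p)
              (volume.restrict (Set.univ ×ˢ Set.Icc a b)) < ∞ →
          eLpNorm (fun z : (Fin n → ℝ) × ℝ => deriv (fun s => F (z.1, s)) z.2)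
              (ENNReal.ofReal p)
              (volume.restrict (Set.univ ×ˢ Set.Icc a b)) < ∞ →
          eLpNorm (fun x : Fin n → ℝ => ⨆ t ∈ Set.Icc a b, ‖F (x, t)‖)
              (ENNReal.ofReal p) volume ≤
            ENNReal.ofReal C *
              (ENNReal.ofReal ((b - a) ^ (-(1:ℝ)/p)) *
                  eLpNorm F (ENNReal.ofReal p)
                    (volume.restrict (Set.univ ×ˢ Set.Icc a b)) +
                (eLpNorm F (ENNReal.ofReal p)
                    (volume.restrict (Set.univ ×ˢ Set.Icc a b))) ^ ((p - 1) / p) *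
                  (eLpNorm (fun z : (Fin n → ℝ) × ℝ => deriv (fun s => F (z.1, s)) z.2)
                      (ENNReal.ofReal p)
                      (volume.restrict (Set.univ ×ˢ Set.Icc a b))) ^ (1 / p)) := by
  have hp0 : (0:ℝ) < p := lt_of_lt_of_le zero_lt_one hp
  refine ⟨p, hp0, ?_⟩
  intro n _hn a b hab F hF h1fin h2fin
  have hba : (0:ℝ) < b - a := sub_pos.2 hab
  set S : Set ((Fin n → ℝ) × ℝ) := Set.univ ×ˢ Set.Icc a b with hSdef
  set U : Set ((Fin n → ℝ) × ℝ) := Set.univ ×ˢ Set.Ioo a b with hUdef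
  set μS := volume.restrict S with hμS
  set P := ENNReal.ofReal p with hPdef
  have hP0 : P ≠ 0 := by
    simp [hPdef, ENNReal.ofReal_pos, hp0, ne_of_gt, (ENNReal.ofReal_pos.2 hp0).ne']
  have hPtop : P ≠ ∞ := ENNReal.ofReal_ne_top
  have hPr : P.toReal = p := ENNReal.toReal_ofReal hp0.le
  set D : (Fin n → ℝ) × ℝ → ℂ := fun z => deriv (fun s => F (z.1, s)) z.2 with hDdef
  set g : (Fin n → ℝ) → ℝ := fun x => ⨆ t ∈ Set.Icc a b, ‖F (x, t)‖ with hgdef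
  set Φ := ∫⁻ z, (‖F z‖₊ : ℝ≥0∞) ^ p ∂μS with hΦdef
  set Ψ := ∫⁻ z, (‖D z‖₊ : ℝ≥0∞) ^ p ∂μS with hΨdef
  have hSmeas : MeasurableSet S := MeasurableSet.univ.prod measurableSet_Icc
  have hUopen : IsOpen U := isOpen_univ.prod isOpen_Ioo
  have hUS : U ⊆ S := Set.prod_mono (le_refl _) Set.Ioo_subset_Icc_self
  -- eLpNorm identities
  have hEF : eLpNorm F P μS = Φ ^ (1/p) := by
    rw [eLpNorm_eq_lintegral_rpow_enorm_toReal hP0 hPtop, hPr]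
    rfl
  have hED : eLpNorm D P μS = Ψ ^ (1/p) := by
    rw [eLpNorm_eq_lintegral_rpow_enorm_toReal hP0 hPtop, hPr]
    rfl
  -- product structure of μS
  have hprod : μS = (volume : Measure (Fin n → ℝ)).prod (volume.restrict (Set.Icc a b)) := by
    rw [hμS, hSdef, Measure.volume_eq_prod, ← Measure.prod_restrict,
      Measure.restrict_univ]
  -- S and U agree a.e.
  have hSUae : S =ᵐ[volume] U := by
    rw [ae_eq_set]
    constructor
    · have hsub : S \ U ⊆ Set.univ ×ˢ ({a, b} : Set ℝ) := by
        rintro ⟨x, t⟩ ⟨⟨-, ht⟩, hnot⟩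
        refine ⟨Set.mem_univ _, ?_⟩
        have : t ∉ Set.Ioo a b := fun hmem => hnot ⟨Set.mem_univ _, hmem⟩
        rcases eq_or_lt_of_le ht.1 with heq | hlt
        · exact Or.inl heq.symm
        rcases eq_or_lt_of_le ht.2 with heq | hlt'
        · exact Or.inr heq
        exact absurd ⟨hlt, hlt'⟩ this
      refine measure_mono_null hsub ?_
      rw [Measure.volume_eq_prod, Measure.prod_prod]
      have : (volume : Measure ℝ) {a, b} = 0 :=
        (Set.Countable.measure_zero (Set.Countable.insert _ (Set.countable_singleton _)) _)
      rw [this, mul_zero]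
    · rw [Set.diff_eq_empty.2 hUS]
      exact measure_empty
  have hμSU : μS = volume.restrict U := by
    rw [hμS]; exact Measure.restrict_congr_set hSUae
  -- measurability of F and D
  have hFsm : AEStronglyMeasurable F μS :=
    hF.continuousOn.aestronglyMeasurable hSmeas
  -- joint continuity of D on U
  have hSnhds : ∀ z ∈ U, S ∈ 𝓝 z := fun z hz =>
    Filter.mem_of_superset (hUopen.mem_nhds hz) hUS
  have hdiff : ∀ z ∈ U, DifferentiableAt ℝ F z := fun z hz =>
    (hF.contDiffAt (hSnhds z hz)).differentiableAt (by simp)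
  have hslice : ∀ z ∈ U,
      HasDerivAt (fun s => F (z.1, s)) (fderiv ℝ F z ((0 : Fin n → ℝ), (1 : ℝ))) z.2 := by
    intro z hz
    have hcurve : HasDerivAt (fun s : ℝ => (z.1, s)) (((0 : Fin n → ℝ), (1 : ℝ))) z.2 :=
      HasDerivAt.prodMk (hasDerivAt_const z.2 z.1) (hasDerivAt_id z.2)
    have h := ((hdiff z hz).hasFDerivAt.comp_hasDerivAt z.2 hcurve)
    simpa [Function.comp_def] using h
  have hSud : UniqueDiffOn ℝ S := uniqueDiffOn_univ.prod (uniqueDiffOn_Icc hab)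
  have hfwcont : ContinuousOn (fderivWithin ℝ F S) S :=
    hF.continuousOn_fderivWithin hSud (by simp)
  have hfw : ∀ z ∈ U, fderivWithin ℝ F S z = fderiv ℝ F z := fun z hz =>
    fderivWithin_of_mem_nhds (hSnhds z hz)
  have hDcontU : ContinuousOn D U := by
    have h1 : ContinuousOn (fun z : (Fin n → ℝ) × ℝ =>
        fderivWithin ℝ F S z ((0 : Fin n → ℝ), (1 : ℝ))) U :=
      ContinuousOn.clm_apply (hfwcont.mono hUS) continuousOn_const
    apply h1.congr
    intro z hz
    show deriv (fun s => F (z.1, s)) z.2 = _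
    rw [(hslice z hz).deriv, ← hfw z hz]
  have hDsm : AEStronglyMeasurable D μS := by
    rw [hμSU]
    exact hDcontU.aestronglyMeasurable hUopen.measurableSet
  have hFen : AEMeasurable (fun z => (‖F z‖₊ : ℝ≥0∞)) μS := hFsm.enorm
  have hDen : AEMeasurable (fun z => (‖D z‖₊ : ℝ≥0∞)) μS := hDsm.enorm
  -- finiteness
  have hΦfin : Φ ≠ ∞ := by
    intro hΦtop
    rw [hEF, hΦtop, ENNReal.top_rpow_of_pos (by positivity : (0:ℝ) < 1/p)] at h1fin
    exact absurd h1fin (lt_irrefl _)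
  -- kernel
  set c₁ : ℝ≥0∞ := (ENNReal.ofReal (b - a))⁻¹ with hc₁
  set c₂ : ℝ≥0∞ := ENNReal.ofReal p with hc₂
  have hc₁top : c₁ ≠ ∞ := by
    rw [hc₁]
    simp [ENNReal.inv_ne_top, (ENNReal.ofReal_pos.2 hba).ne']
  have hc₂top : c₂ ≠ ∞ := ENNReal.ofReal_ne_top
  set κ : (Fin n → ℝ) × ℝ → ℝ≥0∞ := fun z =>
    c₁ * (‖F z‖₊ : ℝ≥0∞) ^ p + c₂ * ((‖F z‖₊ : ℝ≥0∞) ^ (p - 1) * (‖D z‖₊ : ℝ≥0∞)) with hκ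
  -- Step A: pointwise-in-x bound
  have stepA : ∀ x : Fin n → ℝ, (‖g x‖₊ : ℝ≥0∞) ^ p ≤
      ∫⁻ t in Set.Icc a b, κ (x, t) := by
    intro x
    set A := ∫ t in Set.Icc a b, ‖F (x, t)‖ ^ p with hA
    set B := ∫ t in Set.Icc a b, ‖F (x, t)‖ ^ (p - 1) * ‖deriv (fun s => F (x, s)) t‖ with hB
    have hperx := perx hp hab hF x
    have hA0 : (0:ℝ) ≤ A :=
      setIntegral_nonneg measurableSet_Icc (fun t _ => Real.rpow_nonneg (norm_nonneg _) _)
    have hB0 : (0:ℝ) ≤ B :=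
      setIntegral_nonneg measurableSet_Icc
        (fun t _ => mul_nonneg (Real.rpow_nonneg (norm_nonneg _) _) (norm_nonneg _))
    set r := (b - a)⁻¹ * A + p * B with hr
    have hr0 : (0:ℝ) ≤ r :=
      add_nonneg (mul_nonneg (inv_nonneg.2 hba.le) hA0) (mul_nonneg hp0.le hB0)
    have hgle : g x ≤ r ^ ((1:ℝ)/p) := by
      apply Real.iSup_le _ (Real.rpow_nonneg hr0 _)
      intro t
      apply Real.iSup_le _ (Real.rpow_nonneg hr0 _)
      intro ht
      have h1 := hperx t ht
      calc ‖F (x, t)‖ = (‖F (x, t)‖ ^ p) ^ ((1:ℝ)/p) := by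
            rw [← Real.rpow_mul (norm_nonneg _), mul_one_div, div_self hp0.ne', Real.rpow_one]
        _ ≤ r ^ ((1:ℝ)/p) :=
            Real.rpow_le_rpow (Real.rpow_nonneg (norm_nonneg _) _) h1 (by positivity)
    have hg0 : (0:ℝ) ≤ g x :=
      Real.iSup_nonneg fun t => Real.iSup_nonneg fun _ => norm_nonneg _
    have hgp : g x ^ p ≤ r := by
      calc g x ^ p ≤ (r ^ ((1:ℝ)/p)) ^ p := Real.rpow_le_rpow hg0 hgle hp0.le
        _ = r := by
            rw [← Real.rpow_mul hr0, one_div, inv_mul_cancel₀ hp0.ne', Real.rpow_one]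
    have e1 : (‖g x‖₊ : ℝ≥0∞) ^ p = ENNReal.ofReal (g x ^ p) := by
      rw [← ofReal_norm_eq_coe_nnnorm, Real.norm_eq_abs, abs_of_nonneg hg0,
        ENNReal.ofReal_rpow_of_nonneg hg0 hp0.le]
    rw [e1]
    have e2 : ENNReal.ofReal (g x ^ p) ≤ c₁ * ENNReal.ofReal A + c₂ * ENNReal.ofReal B := by
      refine le_trans (ENNReal.ofReal_le_ofReal hgp) ?_
      rw [hr]
      refine le_trans ENNReal.ofReal_add_le ?_
      apply add_le_add
      · rw [ENNReal.ofReal_mul (inv_nonneg.2 hba.le), ENNReal.ofReal_inv_of_pos hba]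
      · rw [ENNReal.ofReal_mul hp0.le]
    refine e2.trans ?_
    have e3 : ENNReal.ofReal A ≤ ∫⁻ t in Set.Icc a b, (‖F (x, t)‖₊ : ℝ≥0∞) ^ p := by
      calc ENNReal.ofReal A ≤ (‖A‖₊ : ℝ≥0∞) := by
            rw [← ofReal_norm_eq_coe_nnnorm, Real.norm_eq_abs]
            exact ENNReal.ofReal_le_ofReal (le_abs_self _)
        _ ≤ ∫⁻ t in Set.Icc a b, (‖ ‖F (x, t)‖ ^ p ‖₊ : ℝ≥0∞) :=
            enorm_integral_le_lintegral_enorm _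
        _ = ∫⁻ t in Set.Icc a b, (‖F (x, t)‖₊ : ℝ≥0∞) ^ p := by
            apply lintegral_congr
            intro t
            rw [← ofReal_norm_eq_coe_nnnorm, Real.norm_eq_abs,
              abs_of_nonneg (Real.rpow_nonneg (norm_nonneg _) _),
              ← ofReal_norm_eq_coe_nnnorm (F (x, t)),
              ENNReal.ofReal_rpow_of_nonneg (norm_nonneg _) hp0.le]
    have e4 : ENNReal.ofReal B ≤ ∫⁻ t in Set.Icc a b,
        (‖F (x, t)‖₊ : ℝ≥0∞) ^ (p - 1) * (‖D (x, t)‖₊ : ℝ≥0∞) := by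
      calc ENNReal.ofReal B ≤ (‖B‖₊ : ℝ≥0∞) := by
            rw [← ofReal_norm_eq_coe_nnnorm, Real.norm_eq_abs]
            exact ENNReal.ofReal_le_ofReal (le_abs_self _)
        _ ≤ ∫⁻ t in Set.Icc a b,
            (‖ ‖F (x, t)‖ ^ (p - 1) * ‖deriv (fun s => F (x, s)) t‖ ‖₊ : ℝ≥0∞) :=
            enorm_integral_le_lintegral_enorm _
        _ = ∫⁻ t in Set.Icc a b, (‖F (x, t)‖₊ : ℝ≥0∞) ^ (p - 1) * (‖D (x, t)‖₊ : ℝ≥0∞) := by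
            apply lintegral_congr
            intro t
            rw [← ofReal_norm_eq_coe_nnnorm, Real.norm_eq_abs,
              abs_of_nonneg (mul_nonneg (Real.rpow_nonneg (norm_nonneg _) _) (norm_nonneg _)),
              ENNReal.ofReal_mul (Real.rpow_nonneg (norm_nonneg _) _),
              ← ofReal_norm_eq_coe_nnnorm (F (x, t)),
              ENNReal.ofReal_rpow_of_nonneg (norm_nonneg _) (by linarith : (0:ℝ) ≤ p - 1),
              ← ofReal_norm_eq_coe_nnnorm (D (x, t))]
    calc c₁ * ENNReal.ofReal A + c₂ * ENNReal.ofReal B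
        ≤ c₁ * (∫⁻ t in Set.Icc a b, (‖F (x, t)‖₊ : ℝ≥0∞) ^ p) +
          c₂ * (∫⁻ t in Set.Icc a b,
            (‖F (x, t)‖₊ : ℝ≥0∞) ^ (p - 1) * (‖D (x, t)‖₊ : ℝ≥0∞)) :=
          add_le_add (mul_le_mul_right e3 c₁) (mul_le_mul_right e4 c₂)
      _ ≤ (∫⁻ t in Set.Icc a b, c₁ * (‖F (x, t)‖₊ : ℝ≥0∞) ^ p) +
          ∫⁻ t in Set.Icc a b,
            c₂ * ((‖F (x, t)‖₊ : ℝ≥0∞) ^ (p - 1) * (‖D (x, t)‖₊ : ℝ≥0∞)) :=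
          add_le_add (lintegral_const_mul_le _ _) (lintegral_const_mul_le _ _)
      _ ≤ ∫⁻ t in Set.Icc a b, (c₁ * (‖F (x, t)‖₊ : ℝ≥0∞) ^ p +
            c₂ * ((‖F (x, t)‖₊ : ℝ≥0∞) ^ (p - 1) * (‖D (x, t)‖₊ : ℝ≥0∞))) :=
          le_lintegral_add _ _
      _ = ∫⁻ t in Set.Icc a b, κ (x, t) := rfl
  -- Step B: measurability of κ and Tonelli
  have hκm : AEMeasurable κ μS := by
    have h1 : AEMeasurable (fun z => (‖F z‖₊ : ℝ≥0∞) ^ p) μS :=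
      ENNReal.continuous_rpow_const.measurable.comp_aemeasurable hFen
    have h2 : AEMeasurable (fun z => (‖F z‖₊ : ℝ≥0∞) ^ (p - 1)) μS :=
      ENNReal.continuous_rpow_const.measurable.comp_aemeasurable hFen
    exact (h1.const_mul _).add ((h2.mul hDen).const_mul _)
  have hTon : ∫⁻ x, ∫⁻ t in Set.Icc a b, κ (x, t) ∂volume = ∫⁻ z, κ z ∂μS := by
    rw [hprod] at hκm ⊢
    exact (MeasureTheory.lintegral_prod κ hκm).symm
  -- Split the integral of κ
  have hsplit : ∫⁻ z, κ z ∂μS =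
      c₁ * Φ + c₂ * ∫⁻ z, (‖F z‖₊ : ℝ≥0∞) ^ (p - 1) * (‖D z‖₊ : ℝ≥0∞) ∂μS := by
    rw [hκ]
    rw [lintegral_add_left']
    · rw [lintegral_const_mul' _ _ hc₁top, lintegral_const_mul' _ _ hc₂top]
    · exact (ENNReal.continuous_rpow_const.measurable.comp_aemeasurable hFen).const_mul _
  -- Hölder
  have hHolder : ∫⁻ z, (‖F z‖₊ : ℝ≥0∞) ^ (p - 1) * (‖D z‖₊ : ℝ≥0∞) ∂μS ≤
      Φ ^ ((p - 1)/p) * Ψ ^ (1/p) := by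
    rcases eq_or_lt_of_le hp with hp1 | hp1
    · -- p = 1
      have hpe : p = 1 := hp1.symm
      subst hpe
      have hcg : ∀ z, (‖F z‖₊ : ℝ≥0∞) ^ ((1:ℝ) - 1) * (‖D z‖₊ : ℝ≥0∞)
          = (‖D z‖₊ : ℝ≥0∞) ^ (1:ℝ) := by
        intro z
        norm_num
      rw [lintegral_congr hcg]
      simp [hΨdef]
    · have hpq : (p/(p-1)).HolderConjugate p :=
        (Real.HolderConjugate.conjExponent hp1).symm
      have hfm : AEMeasurable (fun z => (‖F z‖₊ : ℝ≥0∞) ^ (p - 1)) μS :=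
        ENNReal.continuous_rpow_const.measurable.comp_aemeasurable hFen
      have H := ENNReal.lintegral_mul_le_Lp_mul_Lq μS hpq hfm hDen
      have e1 : ∀ z, ((‖F z‖₊ : ℝ≥0∞) ^ (p-1)) ^ (p/(p-1)) = (‖F z‖₊ : ℝ≥0∞) ^ p := by
        intro z
        rw [← ENNReal.rpow_mul]
        congr 1
        rw [mul_comm, div_mul_cancel₀ _ (by linarith : p - 1 ≠ 0)]
      simp only [Pi.mul_apply] at H
      refine le_trans H ?_
      apply le_of_eq
      rw [lintegral_congr e1, one_div_div]
  -- assemble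
  have key : ∫⁻ x, (‖g x‖₊ : ℝ≥0∞) ^ p ∂volume ≤
      c₁ * Φ + c₂ * (Φ ^ ((p - 1)/p) * Ψ ^ (1/p)) := by
    refine le_trans (lintegral_mono stepA) ?_
    rw [hTon, hsplit]
    exact add_le_add_right (mul_le_mul_right hHolder c₂) (c₁ * Φ)
  have hp1p : (0:ℝ) ≤ 1/p := by positivity
  have hp1p1 : (1:ℝ)/p ≤ 1 := by
    rw [div_le_one hp0]; exact hp
  have honele : (1:ℝ≥0∞) ≤ ENNReal.ofReal p := by
    rw [← ENNReal.ofReal_one]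
    exact ENNReal.ofReal_le_ofReal hp
  have hgnorm : eLpNorm g P volume
      = (∫⁻ x, (‖g x‖₊ : ℝ≥0∞) ^ p ∂volume) ^ (1/p) := by
    rw [eLpNorm_eq_lintegral_rpow_enorm_toReal hP0 hPtop, hPr]
    rfl
  have term1 : (c₁ * Φ) ^ ((1:ℝ)/p)
      = ENNReal.ofReal ((b - a) ^ (-(1:ℝ)/p)) * Φ ^ (1/p) := by
    rw [ENNReal.mul_rpow_of_nonneg _ _ hp1p]
    congr 1
    rw [hc₁, ← ENNReal.rpow_neg_one, ← ENNReal.rpow_mul]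
    have he : (-1 : ℝ) * (1/p) = -(1:ℝ)/p := by ring
    rw [he, ENNReal.ofReal_rpow_of_pos hba]
  have term2 : (c₂ * (Φ ^ ((p - 1)/p) * Ψ ^ (1/p))) ^ ((1:ℝ)/p)
      ≤ ENNReal.ofReal p * ((Φ ^ ((1:ℝ)/p)) ^ ((p - 1)/p) * (Ψ ^ ((1:ℝ)/p)) ^ ((1:ℝ)/p)) := by
    rw [ENNReal.mul_rpow_of_nonneg _ _ hp1p, ENNReal.mul_rpow_of_nonneg _ _ hp1p]
    have hc2le : c₂ ^ ((1:ℝ)/p) ≤ ENNReal.ofReal p := by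
      calc c₂ ^ ((1:ℝ)/p) ≤ c₂ ^ (1:ℝ) :=
            ENNReal.rpow_le_rpow_of_exponent_le (by rw [hc₂]; exact honele) hp1p1
        _ = ENNReal.ofReal p := by rw [ENNReal.rpow_one]
    have e1 : (Φ ^ ((p-1)/p)) ^ ((1:ℝ)/p) = (Φ ^ ((1:ℝ)/p)) ^ ((p - 1)/p) := by
      rw [← ENNReal.rpow_mul, ← ENNReal.rpow_mul, mul_comm]
    rw [e1]
    exact mul_le_mul_left hc2le _
  calc eLpNorm g P volume
      = (∫⁻ x, (‖g x‖₊ : ℝ≥0∞) ^ p ∂volume) ^ ((1:ℝ)/p) := hgnorm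
    _ ≤ (c₁ * Φ + c₂ * (Φ ^ ((p - 1)/p) * Ψ ^ (1/p))) ^ ((1:ℝ)/p) :=
        ENNReal.rpow_le_rpow key hp1p
    _ ≤ (c₁ * Φ) ^ ((1:ℝ)/p) + (c₂ * (Φ ^ ((p - 1)/p) * Ψ ^ (1/p))) ^ ((1:ℝ)/p) :=
        ENNReal.rpow_add_le_add_rpow _ _ hp1p hp1p1
    _ ≤ ENNReal.ofReal ((b - a) ^ (-(1:ℝ)/p)) * Φ ^ (1/p) +
        ENNReal.ofReal p * ((Φ ^ ((1:ℝ)/p)) ^ ((p - 1)/p) * (Ψ ^ ((1:ℝ)/p)) ^ ((1:ℝ)/p)) := by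
        rw [term1]
        exact add_le_add_right term2 _
    _ ≤ ENNReal.ofReal p * (ENNReal.ofReal ((b - a) ^ (-(1:ℝ)/p)) * Φ ^ (1/p)) +
        ENNReal.ofReal p * ((Φ ^ ((1:ℝ)/p)) ^ ((p - 1)/p) * (Ψ ^ ((1:ℝ)/p)) ^ ((1:ℝ)/p)) := by
        apply add_le_add_left
        exact le_mul_of_one_le_left zero_le honele
    _ = ENNReal.ofReal p * (ENNReal.ofReal ((b - a) ^ (-(1:ℝ)/p)) * Φ ^ (1/p) +
        (Φ ^ ((1:ℝ)/p)) ^ ((p - 1)/p) * (Ψ ^ ((1:ℝ)/p)) ^ ((1:ℝ)/p)) := by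
        rw [mul_add]
    _ = ENNReal.ofReal p * (ENNReal.ofReal ((b - a) ^ (-(1:ℝ)/p)) * eLpNorm F P μS +
        (eLpNorm F P μS) ^ ((p - 1)/p) * (eLpNorm D P μS) ^ ((1:ℝ)/p)) := by
        rw [hEF, hED]

end
end
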